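/- arXiv:2210.06757 — 10 statements merged into one kernel-verified Lean document; each statement's English description precedes it below -/
import Mathlib

section
/- Let H be a complex Hilbert space and X_1,...,X_n bounded self-adjoint operators on H satisfying the algebraic structure X_j X_k = α_{jk}·1 + Σ_{ℓ=1}^n β_{jkℓ} X_ℓ for all j,k, where α ∈ ℂ^{n×n} is Hermitian (α* = α) and each section β_ℓ := (β_{jkℓ})_{1≤j,k≤n} ∈ ℂ^{n×n} is Hermitian (β_ℓ* = β_ℓ). Let τ_k := Tr β_k (a real number) for k=1,...,n and γ := sqrt( Tr α + (1/4) Σ_{k=1}^n τ_k² ). Then the operator norm of each system variable satisfies ‖X_k‖ ≤ |τ_k|/2 + γ for every k = 1,...,n. -/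
/-!
Completing the square: the shifted operators `Y ℓ = X ℓ - (τ ℓ / 2) • 1` satisfy
`∑ ℓ, Y ℓ * Y ℓ = (Tr α + ¼ ∑ τ²) • 1`, because the diagonal structure relations
`X ℓ * X ℓ = α ℓ ℓ • 1 + ∑ j, β ℓ ℓ j • X j` contribute exactly `∑ j, τ j • X j` in linear terms.
As the `Y ℓ` are self-adjoint, `‖Y k x‖² ≤ ∑ ℓ, ‖Y ℓ x‖² = Re ⟪(∑ ℓ, Y ℓ * Y ℓ) x, x⟫ = γ² ‖x‖²`,
so `‖Y k‖ ≤ γ`, and `‖X k‖ ≤ ‖Y k‖ + |τ k| / 2`.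
-/

open ContinuousLinearMap

theorem sum_mul_self_sub_half_smul_one_eq {A ι : Type*} [Ring A] [Algebra ℂ A] [Fintype ι]
    (X : ι → A) (a : ι → ℂ) (b : ι → ι → ℂ)
    (hsq : ∀ j, X j * X j = a j • 1 + ∑ ℓ, b j ℓ • X ℓ) (τ : ι → ℂ) (hτ : ∀ ℓ, τ ℓ = ∑ j, b j ℓ) :
    ∑ ℓ, (X ℓ - (τ ℓ / 2) • 1) * (X ℓ - (τ ℓ / 2) • 1)
      = (∑ j, a j + ∑ ℓ, (τ ℓ / 2) ^ 2) • (1 : A) := by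
  have hshift_sq : ∀ ℓ, (X ℓ - (τ ℓ / 2) • 1) * (X ℓ - (τ ℓ / 2) • 1)
      = X ℓ * X ℓ - τ ℓ • X ℓ + (τ ℓ / 2) ^ 2 • 1 := by
    intro ℓ
    simp only [sub_mul, mul_sub, smul_mul_assoc, mul_smul_comm, one_mul, mul_one]
    module
  have hlin : ∑ j, ∑ ℓ, b j ℓ • X ℓ = ∑ ℓ, τ ℓ • X ℓ := by
    rw [Finset.sum_comm]
    simp only [← Finset.sum_smul, hτ]
  simp only [hshift_sq, hsq, Finset.sum_add_distrib, Finset.sum_sub_distrib, ← Finset.sum_smul,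
    hlin, add_smul]
  abel

theorem norm_le_sqrt_re_of_sum_mul_self_eq_smul_one {H ι : Type*} [NormedAddCommGroup H]
    [InnerProductSpace ℂ H] [CompleteSpace H] [Fintype ι] {Y : ι → H →L[ℂ] H}
    (hY : ∀ ℓ, IsSelfAdjoint (Y ℓ)) {s : ℂ} (hs : ∑ ℓ, Y ℓ * Y ℓ = s • 1) (k : ι) :
    ‖Y k‖ ≤ √s.re := by
  have hnorm_sq : ∀ ℓ x, ‖Y ℓ x‖ ^ 2 = (inner ℂ ((Y ℓ * Y ℓ) x) x).re := fun ℓ x => by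
    rw [apply_norm_sq_eq_inner_adjoint_left, ← star_eq_adjoint, (hY ℓ).star_eq]; rfl
  have hsum : ∀ x, ∑ ℓ, ‖Y ℓ x‖ ^ 2 = s.re * ‖x‖ ^ 2 := fun x => by
    simp only [hnorm_sq, ← Complex.re_sum, ← sum_inner, ← sum_apply, hs, smul_apply,
      one_apply_eq_self, inner_smul_left, inner_self_eq_norm_sq_to_K]
    simp [← Complex.ofReal_pow]
  refine opNorm_le_bound _ (Real.sqrt_nonneg _) fun x => ?_
  rw [← Real.sqrt_sq (norm_nonneg (Y k x)), ← Real.sqrt_sq (norm_nonneg x),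
    ← Real.sqrt_mul' _ (sq_nonneg _), ← hsum]
  exact Real.sqrt_le_sqrt (Finset.single_le_sum (fun ℓ _ => sq_nonneg ‖Y ℓ x‖) (Finset.mem_univ k))

theorem norm_bound_of_algebraic_structure_general
    {H : Type*} [NormedAddCommGroup H] [InnerProductSpace ℂ H] [CompleteSpace H]
    {n : ℕ} (X : Fin n → H →L[ℂ] H)
    (α : Fin n → Fin n → ℂ) (β : Fin n → Fin n → Fin n → ℂ)
    (hsa : ∀ k, IsSelfAdjoint (X k))
    (hstruct : ∀ j k, X j * X k = α j k • (1 : H →L[ℂ] H) + ∑ ℓ, β j k ℓ • X ℓ)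
    (τ : Fin n → ℝ) (hτ : ∀ k, (τ k : ℂ) = ∑ j, β j j k)
    (γ : ℝ) (hγ : γ = Real.sqrt ((∑ j, α j j).re + (1 / 4) * ∑ k, (τ k) ^ 2)) :
    ∀ k, ‖X k‖ ≤ |τ k| / 2 + γ := by
  intro k
  set Y : Fin n → H →L[ℂ] H := fun ℓ => X ℓ - ((τ ℓ : ℂ) / 2) • 1
  have hhalf : ∀ ℓ, (τ ℓ : ℂ) / 2 = ((τ ℓ / 2 : ℝ) : ℂ) := fun ℓ => by push_cast; rfl
  have hY_sa : ∀ ℓ, IsSelfAdjoint (Y ℓ) := fun ℓ =>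
    (hsa ℓ).sub (((hhalf ℓ).symm ▸ Complex.conj_ofReal _ : IsSelfAdjoint ((τ ℓ : ℂ) / 2)).smul
      (IsSelfAdjoint.one _))
  have hY_sq : ∑ ℓ, Y ℓ * Y ℓ = (∑ j, α j j + ∑ ℓ, ((τ ℓ : ℂ) / 2) ^ 2) • 1 :=
    sum_mul_self_sub_half_smul_one_eq X _ _ (fun j => hstruct j j) _ hτ
  have hY_norm : ‖Y k‖ ≤ γ := by
    refine (norm_le_sqrt_re_of_sum_mul_self_eq_smul_one hY_sa hY_sq k).trans_eq ?_
    rw [hγ, Finset.mul_sum]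
    congr 1
    simp only [Complex.add_re, Complex.re_sum, hhalf, ← Complex.ofReal_pow, Complex.ofReal_re]
    exact congrArg _ (Finset.sum_congr rfl fun ℓ _ => by ring)
  calc ‖X k‖ = ‖Y k + ((τ k : ℂ) / 2) • (1 : H →L[ℂ] H)‖ := by rw [sub_add_cancel]
    _ ≤ γ + |τ k| / 2 := by
      refine (norm_add_le _ _).trans (add_le_add hY_norm ((norm_smul_le _ _).trans ?_))
      rw [hhalf, Complex.norm_real, Real.norm_eq_abs, abs_div, abs_two]
      exact mul_le_of_le_one_right (by positivity) norm_id_le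
    _ = |τ k| / 2 + γ := add_comm _ _

/-- **Norm bounds on the system variables (Theorem 2.2).**
If bounded self-adjoint operators `X 1, ..., X n` on a complex Hilbert space satisfy the
algebraic structure `X j * X k = α j k • 1 + ∑ ℓ, β j k ℓ • X ℓ` with `α` Hermitian and
Hermitian sections `β_ℓ`, then with `τ k = Tr β_k` (a real number) and
`γ = sqrt (Tr α + (1/4) * ∑ k, (τ k)²)`, the operator norm of each `X k` is at most
`|τ k|/2 + γ`. -/
theorem norm_bound_of_algebraic_structure
    {H : Type*} [NormedAddCommGroup H] [InnerProductSpace ℂ H] [CompleteSpace H]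
    {n : ℕ} (X : Fin n → H →L[ℂ] H)
    (α : Fin n → Fin n → ℂ) (β : Fin n → Fin n → Fin n → ℂ)
    (hsa : ∀ k, IsSelfAdjoint (X k))
    (hstruct : ∀ j k, X j * X k = α j k • (1 : H →L[ℂ] H) + ∑ ℓ, β j k ℓ • X ℓ)
    (hα : ∀ j k, starRingEnd ℂ (α j k) = α k j)
    (hβ : ∀ j k ℓ, starRingEnd ℂ (β j k ℓ) = β k j ℓ)
    (τ : Fin n → ℝ) (hτ : ∀ k, (τ k : ℂ) = ∑ j, β j j k)
    (γ : ℝ) (hγ : γ = Real.sqrt ((∑ j, α j j).re + (1 / 4) * ∑ k, (τ k) ^ 2)) :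
    ∀ k, ‖X k‖ ≤ |τ k| / 2 + γ :=
  norm_bound_of_algebraic_structure_general X α β hsa hstruct τ hτ γ hγ
end

section
/- Let N ≥ 1 and let X_1,...,X_n be Hermitian N×N complex matrices satisfying the algebraic structure X_j X_k = α_{jk}·I_N + Σ_{ℓ=1}^n β_{jkℓ} X_ℓ for all j,k, where α ∈ ℂ^{n×n} is Hermitian and each section β_ℓ := (β_{jkℓ})_{1≤j,k≤n} is Hermitian. If every X_k is traceless, i.e. Tr X_k = 0 for k = 1,...,n, then the matrix α is positive semi-definite. -/
/-!
Taking traces in the structure relation kills every `X ℓ`, so `N * α j k = Tr (X j * X k)`.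
Since the `X j` are Hermitian, this is `Tr ((X j)ᴴ * X k)`, the Gram matrix of the `X j` for the
Hilbert–Schmidt inner product; hence `α` is `N⁻¹` times a positive semi-definite matrix.
-/

open scoped ComplexOrder
open Matrix

namespace Matrix

variable {ι m n R : Type*} [Fintype ι] [Fintype m] [Fintype n]

theorem posSemidef_of_trace_conjTranspose_mul [CommRing R] [PartialOrder R] [StarRing R]
    [StarOrderedRing R] (X : ι → Matrix m n R) :
    (of fun j k => ((X j)ᴴ * X k).trace).PosSemidef := by
  -- the trace form is the Gram form of the matrices flattened into columns
  convert posSemidef_conjTranspose_mul_self (of fun (p : n × m) k => X k p.2 p.1) using 1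
  ext j k
  simp [trace, mul_apply, Fintype.sum_prod_type]

theorem trace_smul_one_add_sum_smul [DecidableEq m] [CommRing R] (X : ι → Matrix m m R)
    (htr : ∀ ℓ, (X ℓ).trace = 0) (a : R) (b : ι → R) :
    (a • (1 : Matrix m m R) + ∑ ℓ, b ℓ • X ℓ).trace = Fintype.card m * a := by
  simp [trace_sum, htr, mul_comm]

end Matrix

theorem alpha_posSemidef_of_traceless_general
    {N n : ℕ} (hN : 1 ≤ N)
    (X : Fin n → Matrix (Fin N) (Fin N) ℂ)
    (α : Matrix (Fin n) (Fin n) ℂ) (β : Fin n → Fin n → Fin n → ℂ)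
    (hX : ∀ k, (X k).IsHermitian)
    (hstruct : ∀ j k, X j * X k
      = α j k • (1 : Matrix (Fin N) (Fin N) ℂ) + ∑ ℓ, β j k ℓ • X ℓ)
    (htr : ∀ k, (X k).trace = 0) :
    α.PosSemidef := by
  have hgram : α = (N : ℝ)⁻¹ • of fun j k => ((X j)ᴴ * X k).trace := by
    have hN' : (N : ℂ) ≠ 0 := by exact_mod_cast (Nat.one_le_iff_ne_zero.mp hN)
    ext j k
    simp [(hX j).eq, hstruct, trace_smul_one_add_sum_smul X htr, hN']
  rw [hgram]
  exact (posSemidef_of_trace_conjTranspose_mul X).smul (by positivity)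

/-- **Positive semi-definiteness of the structure matrix `α` (Theorem 2.3, finite-dimensional
case).** If Hermitian `N×N` matrices `X 1, ..., X n` (with `N ≥ 1`) satisfy the algebraic
structure `X j * X k = α j k • I + ∑ ℓ, β j k ℓ • X ℓ` with `α` Hermitian and Hermitian
sections `β_ℓ`, and each `X k` is traceless, then the matrix `α` is positive semi-definite. -/
theorem alpha_posSemidef_of_traceless
    {N n : ℕ} (hN : 1 ≤ N)
    (X : Fin n → Matrix (Fin N) (Fin N) ℂ)
    (α : Matrix (Fin n) (Fin n) ℂ) (β : Fin n → Fin n → Fin n → ℂ)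
    (hX : ∀ k, (X k).IsHermitian)
    (hstruct : ∀ j k, X j * X k
      = α j k • (1 : Matrix (Fin N) (Fin N) ℂ) + ∑ ℓ, β j k ℓ • X ℓ)
    (hα : α.IsHermitian)
    (hβ : ∀ ℓ, (Matrix.of fun j k => β j k ℓ).IsHermitian)
    (htr : ∀ k, (X k).trace = 0) :
    α.PosSemidef :=
  alpha_posSemidef_of_traceless_general hN X α β hX hstruct htr
end

section
/- Let α ∈ ℝ^{n×n} be a symmetric positive definite matrix and θ = (θ_{jkℓ}) ∈ ℝ^{n×n×n} an array with antisymmetric sections (θ_{jkℓ} = −θ_{kjℓ} for all j,k,ℓ) satisfying Σ_{ℓ=1}^n (α_{ℓs} θ_{jkℓ} − α_{jℓ} θ_{ksℓ}) = 0 for all j,k,s. Then for every vector E ∈ ℝ^n, every complex eigenvalue of the matrix A_0 ∈ ℝ^{n×n} with entries (A_0)_{jℓ} = 2 Σ_{k=1}^n θ_{jkℓ} E_k has zero real part, i.e. the spectrum of A_0 is contained in the imaginary axis iℝ. -/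
/-!
The compatibility relation and the antisymmetry of the sections give `A₀ α = -(α A₀ᵀ)`, i.e.
`α A₀ᵀ` is skew-symmetric. If `A₀ᴴ v = w v` with `v ≠ 0`, then `v* α A₀ᴴ v = w (v* α v)` is
purely imaginary while `v* α v > 0`, so `Re w = 0`; the eigenvalues of `A₀` are the conjugates
of those of `A₀ᴴ`.
-/

open Matrix Finset
open scoped MatrixOrder ComplexOrder

section Diamond

variable {n R : Type*} [Fintype n] [CommRing R]

/-- The paper's `Θ ⋄ E`, whose `ℓ`-th column is `Θ_ℓ E`. -/
def diamond (θ : n → n → n → R) (E : n → R) : Matrix n n R :=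
  of fun j ℓ => ∑ k, θ j k ℓ * E k

theorem diamond_mul_eq_neg_mul_transpose {α : Matrix n n R} {θ : n → n → n → R}
    (hanti : ∀ j k ℓ, θ j k ℓ = - θ k j ℓ)
    (hrel : ∀ j k s, ∑ ℓ, (α ℓ s * θ j k ℓ - α j ℓ * θ k s ℓ) = 0) (E : n → R) :
    diamond θ E * α = -(α * (diamond θ E)ᵀ) := by
  ext j s
  have hrel' (k : n) : ∑ ℓ, α ℓ s * θ j k ℓ = ∑ ℓ, α j ℓ * θ k s ℓ := by
    rw [← sub_eq_zero, ← sum_sub_distrib, hrel]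
  calc (diamond θ E * α) j s
      = ∑ k, (∑ ℓ, α ℓ s * θ j k ℓ) * E k := by
        simp only [diamond, mul_apply, of_apply, sum_mul]
        rw [sum_comm]
        simp only [mul_comm, mul_left_comm]
    _ = ∑ k, (∑ ℓ, α j ℓ * θ k s ℓ) * E k := by simp only [hrel']
    _ = -(α * (diamond θ E)ᵀ) j s := by
        simp only [diamond, mul_apply, of_apply, transpose_apply, mul_sum, sum_mul,
          ← sum_neg_distrib]
        rw [sum_comm]
        refine sum_congr rfl fun ℓ _ => sum_congr rfl fun k _ => ?_
        rw [hanti k s ℓ]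
        ring

end Diamond

namespace Matrix

variable {n 𝕜 : Type*} [Fintype n] [RCLike 𝕜]

theorem PosDef.map_algebraMap {α : Matrix n n ℝ} (hα : α.PosDef) :
    (α.map (algebraMap ℝ 𝕜)).PosDef := by
  classical
  set S := CFC.sqrt α
  have hS : Sᴴ * S = α := by
    rw [← star_eq_conjTranspose, (IsSelfAdjoint.of_nonneg (CFC.sqrt_nonneg α)).star_eq]
    exact CFC.sqrt_mul_sqrt_self α hα.posSemidef.nonneg
  have hsemi : (α.map (algebraMap ℝ 𝕜)).PosSemidef := by
    rw [← hS, Matrix.map_mul, conjTranspose_map (algebraMap ℝ 𝕜) (fun x => by simp)]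
    exact posSemidef_conjTranspose_mul_self _
  rw [hsemi.posDef_iff_det_ne_zero, ← RingHom.mapMatrix_apply, ← RingHom.map_det]
  exact (map_ne_zero _).mpr hα.det_pos.ne'

theorem star_star_dotProduct_mulVec (X : Matrix n n 𝕜) (v : n → 𝕜) :
    star (star v ⬝ᵥ X *ᵥ v) = star v ⬝ᵥ Xᴴ *ᵥ v := by
  rw [star_dotProduct, star_star, star_mulVec, dotProduct_mulVec]

theorem re_star_dotProduct_mulVec_self_eq_zero {X : Matrix n n 𝕜} (hX : Xᴴ = -X)
    (v : n → 𝕜) : RCLike.re (star v ⬝ᵥ X *ᵥ v) = 0 := by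
  have h := congrArg RCLike.re (star_star_dotProduct_mulVec X v)
  rw [hX, neg_mulVec, dotProduct_neg, map_neg, RCLike.star_def, RCLike.conj_re] at h
  linarith

theorem re_eq_zero_of_mulVec_eq_smul {P M : Matrix n n 𝕜} (hP : P.PosDef)
    (hPM : (P * M)ᴴ = -(P * M)) {z : 𝕜} {v : n → 𝕜} (hv : v ≠ 0) (hMv : M *ᵥ v = z • v) :
    RCLike.re z = 0 := by
  have hq : star v ⬝ᵥ (P * M) *ᵥ v = z * (star v ⬝ᵥ P *ᵥ v) := by
    rw [← mulVec_mulVec, hMv, mulVec_smul, dotProduct_smul, smul_eq_mul]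
  obtain ⟨hp_re, hp_im⟩ := RCLike.pos_iff.mp (hP.dotProduct_mulVec_pos hv)
  have h := re_star_dotProduct_mulVec_self_eq_zero hPM v
  rw [hq, RCLike.mul_re, hp_im, mul_zero, sub_zero] at h
  exact (mul_eq_zero.mp h).resolve_right hp_re.ne'

theorem exists_mulVec_eq_smul_of_mem_spectrum {K : Type*} [Field K] [DecidableEq n]
    {M : Matrix n n K} {z : K} (hz : z ∈ spectrum K M) : ∃ v ≠ 0, M *ᵥ v = z • v := by
  rw [← spectrum_toLin', ← Module.End.hasEigenvalue_iff_mem_spectrum] at hz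
  obtain ⟨v, hv⟩ := hz.exists_hasEigenvector
  exact ⟨v, hv.2, by simpa using hv.apply_eq_smul⟩

variable [DecidableEq n]

theorem re_eq_zero_of_mem_spectrum_of_mul_eq_neg_mul_conjTranspose {P M : Matrix n n 𝕜}
    (hP : P.PosDef) (hMP : M * P = -(P * Mᴴ)) {z : 𝕜} (hz : z ∈ spectrum 𝕜 M) :
    RCLike.re z = 0 := by
  have hz' : star z ∈ spectrum 𝕜 Mᴴ := by
    rw [← star_eq_conjTranspose, spectrum.map_star]
    simpa using hz
  obtain ⟨v, hv, hMv⟩ := exists_mulVec_eq_smul_of_mem_spectrum hz'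
  have hskew : (P * Mᴴ)ᴴ = -(P * Mᴴ) := by
    rw [conjTranspose_mul, conjTranspose_conjTranspose, hP.isHermitian.eq, hMP]
  simpa using re_eq_zero_of_mulVec_eq_smul hP hskew hv hMv

theorem re_eq_zero_of_mem_spectrum_map_of_mul_eq_neg_mul_transpose {α A : Matrix n n ℝ}
    (hα : α.PosDef) (hA : A * α = -(α * Aᵀ)) {z : 𝕜}
    (hz : z ∈ spectrum 𝕜 (A.map (algebraMap ℝ 𝕜))) : RCLike.re z = 0 := by
  refine re_eq_zero_of_mem_spectrum_of_mul_eq_neg_mul_conjTranspose hα.map_algebraMap ?_ hz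
  rw [← conjTranspose_map (algebraMap ℝ 𝕜) (fun x => by simp),
    conjTranspose_eq_transpose_of_trivial,
    ← Matrix.map_mul, ← Matrix.map_mul, hA, Matrix.map_neg _ (map_neg _)]

end Matrix

theorem isolated_dynamics_spectrum_imaginary_general
    {n : ℕ} (α : Matrix (Fin n) (Fin n) ℝ) (hαpd : α.PosDef)
    (θ : Fin n → Fin n → Fin n → ℝ)
    (hanti : ∀ j k ℓ, θ j k ℓ = - θ k j ℓ)
    (hrel : ∀ j k s : Fin n, ∑ ℓ, (α ℓ s * θ j k ℓ - α j ℓ * θ k s ℓ) = 0)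
    (E : Fin n → ℝ)
    (A₀ : Matrix (Fin n) (Fin n) ℝ)
    (hA₀ : ∀ j ℓ, A₀ j ℓ = 2 * ∑ k, θ j k ℓ * E k) :
    ∀ z ∈ spectrum ℂ (A₀.map Complex.ofReal), z.re = 0 := by
  have hA : A₀ = 2 • diamond θ E := by
    ext j ℓ
    simp [diamond, hA₀]
  have hA_skew : A₀ * α = -(α * A₀ᵀ) := by
    rw [hA, smul_mul, transpose_smul, Matrix.mul_smul, diamond_mul_eq_neg_mul_transpose hanti hrel,
      smul_neg]
  intro z hz
  rw [← Complex.coe_algebraMap] at hz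
  exact re_eq_zero_of_mem_spectrum_map_of_mul_eq_neg_mul_transpose hαpd hA_skew hz

/-- **Purely imaginary spectrum of the isolated dynamics matrix (Theorem 5.1).**
For a symmetric positive definite `α ∈ ℝ^{n×n}` and an array `θ` with antisymmetric
sections satisfying `∑ ℓ, (α ℓ s * θ j k ℓ - α j ℓ * θ k s ℓ) = 0`, every complex
eigenvalue of the matrix `A₀` with entries `(A₀) j ℓ = 2 * ∑ k, θ j k ℓ * E k`
has zero real part, for every `E ∈ ℝ^n`. -/
theorem isolated_dynamics_spectrum_imaginary
    {n : ℕ} (α : Matrix (Fin n) (Fin n) ℝ) (hαs : α.IsSymm) (hαpd : α.PosDef)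
    (θ : Fin n → Fin n → Fin n → ℝ)
    (hanti : ∀ j k ℓ, θ j k ℓ = - θ k j ℓ)
    (hrel : ∀ j k s : Fin n, ∑ ℓ, (α ℓ s * θ j k ℓ - α j ℓ * θ k s ℓ) = 0)
    (E : Fin n → ℝ)
    (A₀ : Matrix (Fin n) (Fin n) ℝ)
    (hA₀ : ∀ j ℓ, A₀ j ℓ = 2 * ∑ k, θ j k ℓ * E k) :
    ∀ z ∈ spectrum ℂ (A₀.map Complex.ofReal), z.re = 0 :=
  isolated_dynamics_spectrum_imaginary_general α hαpd θ hanti hrel E A₀ hA₀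
end

section
/- Let Θ_1,...,Θ_n ∈ ℝ^{n×n} be antisymmetric real matrices, M ∈ ℝ^{m×n}, and Ω ∈ ℂ^{m×m} a Hermitian positive semi-definite matrix. Define the linear operator U on ℂ^{n×n} by U(Z) := −4 Σ_{j,k=1}^n Z_{jk} Θ_j Mᵀ Ω M Θ_k. Then for every Hermitian positive semi-definite matrix Z ∈ ℂ^{n×n}, the matrix U(Z) is Hermitian positive semi-definite. -/
/-!
With `D k = M Θ k`, antisymmetry gives `Θ j Mᵀ = -(D j)ᴴ`, so
`U(Z) = 4 ∑ j k, Z j k • (D j)ᴴ Ω (D k)`. This is the compression `Dᴴ (Z ⊗ Ω) D` of the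
Kronecker product `Z ⊗ Ω` by the block column `D = (D 1; …; D n)`, and the Kronecker product
of positive semi-definite matrices is positive semi-definite.
-/

open Matrix
open scoped ComplexOrder

namespace Matrix

open scoped Kronecker

variable {ι m n R : Type*}

def stack (D : ι → Matrix m n R) : Matrix (ι × m) n R :=
  of fun p c => D p.1 p.2 c

theorem conjTranspose_stack_mul_kronecker_mul_stack [Fintype ι] [Fintype m] [CommSemiring R]
    [StarRing R] (Z : Matrix ι ι R) (Ω : Matrix m m R) (D : ι → Matrix m n R) :
    (stack D)ᴴ * (Z ⊗ₖ Ω) * stack D = ∑ j, ∑ k, Z j k • ((D j)ᴴ * Ω * D k) := by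
  ext c c'
  simp only [mul_apply, conjTranspose_apply, stack, of_apply, kronecker_apply, sum_apply,
    smul_apply, smul_eq_mul, Fintype.sum_prod_type, Finset.sum_mul, Finset.mul_sum]
  conv_lhs => enter [2, k]; rw [Finset.sum_comm]
  rw [Finset.sum_comm]
  refine Finset.sum_congr rfl fun j _ => Finset.sum_congr rfl fun k _ =>
    Finset.sum_congr rfl fun b _ => Finset.sum_congr rfl fun a _ => by ring

theorem PosSemidef.sum_smul_conjTranspose_mul_mul {𝕜 : Type*} [RCLike 𝕜] [Fintype ι]
    [Fintype m] [Finite n] {Z : Matrix ι ι 𝕜} {Ω : Matrix m m 𝕜} (hZ : Z.PosSemidef)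
    (hΩ : Ω.PosSemidef) (D : ι → Matrix m n 𝕜) :
    (∑ j, ∑ k, Z j k • ((D j)ᴴ * Ω * D k)).PosSemidef := by
  rw [← conjTranspose_stack_mul_kronecker_mul_stack]
  exact (hZ.kronecker hΩ).conjTranspose_mul_mul_same _

theorem conjTranspose_map_ofReal (A : Matrix m n ℝ) :
    (A.map Complex.ofReal)ᴴ = Aᵀ.map Complex.ofReal := by
  ext
  simp

theorem map_ofReal_mul_transpose_eq_neg_conjTranspose [Fintype m] {Θ : Matrix m m ℝ}
    (hΘ : Θᵀ = -Θ) (M : Matrix n m ℝ) :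
    Θ.map Complex.ofReal * (M.map Complex.ofReal)ᵀ =
      -(M.map Complex.ofReal * Θ.map Complex.ofReal)ᴴ := by
  rw [conjTranspose_mul, conjTranspose_map_ofReal, conjTranspose_map_ofReal, hΘ,
    transpose_map, Matrix.map_neg _ Complex.ofReal_neg, Matrix.neg_mul, neg_neg]

end Matrix

/-- **Positivity of the superoperator `U` (equations (V), (Vpos) of Section 4).**
For antisymmetric real matrices `Θ 1, ..., Θ n`, a real coupling matrix `M` and a
Hermitian positive semi-definite quantum Ito matrix `Ω`, the map
`U(Z) = -4 ∑ j k, Z j k • (Θ j Mᵀ Ω M Θ k)` sends Hermitian positive semi-definite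
matrices to Hermitian positive semi-definite matrices. -/
theorem U_posSemidef
    {n m : ℕ} (Θ : Fin n → Matrix (Fin n) (Fin n) ℝ)
    (hΘ : ∀ ℓ, (Θ ℓ)ᵀ = - Θ ℓ)
    (M : Matrix (Fin m) (Fin n) ℝ)
    (Ω : Matrix (Fin m) (Fin m) ℂ) (hΩ : Ω.PosSemidef)
    (Z : Matrix (Fin n) (Fin n) ℂ) (hZ : Z.PosSemidef) :
    ((-4 : ℂ) • ∑ j, ∑ k, Z j k •
        ((Θ j).map Complex.ofReal * (M.map Complex.ofReal)ᵀ * Ω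
          * M.map Complex.ofReal * (Θ k).map Complex.ofReal)).PosSemidef := by
  simp only [map_ofReal_mul_transpose_eq_neg_conjTranspose (hΘ _),
    Matrix.mul_assoc _ (M.map Complex.ofReal), Matrix.neg_mul, smul_neg, Finset.sum_neg_distrib,
    neg_smul, neg_neg]
  exact (hZ.sum_smul_conjTranspose_mul_mul hΩ _).smul (by norm_num)
end

section
/- Let A ∈ ℝ^{n×n}, let U : ℂ^{n×n} → ℂ^{n×n} be a ℂ-linear map such that U(Z) is Hermitian positive semi-definite whenever Z is Hermitian positive semi-definite, and define the ℂ-linear map Λ on ℂ^{n×n} by Λ(Z) := AZ + ZAᵀ + U(Z). Then for every t ≥ 0 and every Hermitian positive semi-definite Z_0 ∈ ℂ^{n×n}, the matrix exp(tΛ)(Z_0) − e^{tA} Z_0 e^{tAᵀ} is Hermitian positive semi-definite; in particular exp(tΛ)(Z_0) is Hermitian positive semi-definite. -/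
open Matrix
open scoped ComplexOrder

attribute [local instance] Matrix.frobeniusNormedAddCommGroup Matrix.frobeniusNormedSpace
  Matrix.frobeniusNormedRing Matrix.frobeniusNormedAlgebra

instance matrixEndCLM_isTopologicalRing (n : ℕ) :
    IsTopologicalRing (Matrix (Fin n) (Fin n) ℂ →L[ℂ] Matrix (Fin n) (Fin n) ℂ) :=
  have h : ∀ (E : Type) [NormedAddCommGroup E] [NormedSpace ℂ E], IsTopologicalRing (E →L[ℂ] E) :=
    fun _ _ _ => inferInstance
  @h (Matrix (Fin n) (Fin n) ℂ) Matrix.normedAddCommGroup Matrix.normedSpace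

/-!
Write `Λ = Φ + U` with `Φ Z = A Z + Z Aᵀ`. The flow `exp (s Φ) Z = e^{sA} Z e^{sAᵀ}` is a
congruence, so it preserves the positive semidefinite cone. By the Chernoff product formula,
`exp (t (Φ + U)) = lim_m (exp (t Φ / m) (1 + t U / m)) ^ m`. As `U` is positive, each factor
`exp (t Φ / m) (1 + t U / m)` dominates `exp (t Φ / m)` on the cone, hence so do the `m`-th
powers, and `exp (t Φ / m) ^ m = exp (t Φ)`. The cone is closed, so the inequality survives the
limit.
-/

open NormedSpace Filter Topology Asymptotics

section NormedRing

variable {𝔸 : Type*} [NormedRing 𝔸] [NormOneClass 𝔸]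

theorem norm_pow_sub_pow_le {a b : 𝔸} {C : ℝ} (ha : ‖a‖ ≤ C) (hb : ‖b‖ ≤ C) (m : ℕ) :
    ‖a ^ m - b ^ m‖ ≤ m * C ^ (m - 1) * ‖a - b‖ := by
  induction m with
  | zero => simp
  | succ m ih =>
    have hbm : ‖b ^ m‖ ≤ C ^ m :=
      (norm_pow_le b m).trans (pow_le_pow_left₀ (norm_nonneg b) hb m)
    calc ‖a ^ (m + 1) - b ^ (m + 1)‖ = ‖a * (a ^ m - b ^ m) + (a - b) * b ^ m‖ := by
          rw [pow_succ', pow_succ', mul_sub, sub_mul]; abel_nf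
      _ ≤ C * (m * C ^ (m - 1) * ‖a - b‖) + ‖a - b‖ * C ^ m :=
          (norm_add_le _ _).trans <|
            add_le_add (norm_mul_le_of_le ha ih) (norm_mul_le_of_le le_rfl hbm)
      _ = (m + 1 : ℕ) * C ^ (m + 1 - 1) * ‖a - b‖ := by
          rcases m with _ | m
          · simp
          · push_cast; simp only [pow_succ]; ring

namespace NormedSpace

variable [NormedAlgebra ℝ 𝔸]

theorem norm_exp_le_exp_norm (x : 𝔸) : ‖exp x‖ ≤ Real.exp ‖x‖ := by
  rw [exp_eq_tsum ℝ, Real.exp_eq_exp_ℝ]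
  refine tsum_of_norm_bounded (expSeries_div_hasSum_exp ‖x‖) fun k => ?_
  rw [norm_smul, norm_inv, Real.norm_natCast, inv_mul_eq_div]
  gcongr
  exact norm_pow_le x k

variable [CompleteSpace 𝔸]

theorem norm_pow_sub_exp_le {a x : 𝔸} {r : ℝ} {m : ℕ} (hm : m ≠ 0) (hxr : ‖x‖ ≤ r)
    (ha : ‖a‖ ≤ Real.exp ((m : ℝ)⁻¹ * r)) :
    ‖a ^ m - exp x‖ ≤ m * Real.exp r * ‖a - exp ((m : ℝ)⁻¹ • x)‖ := by
  let _ : NormedAlgebra ℚ 𝔸 := .restrictScalars ℚ ℝ 𝔸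
  have hm' : (m : ℝ) ≠ 0 := Nat.cast_ne_zero.mpr hm
  have hexp : exp ((m : ℝ)⁻¹ • x) ^ m = exp x := by
    rw [← NormedSpace.exp_nsmul, ← Nat.cast_smul_eq_nsmul ℝ, smul_smul, mul_inv_cancel₀ hm',
      one_smul]
  have hb : ‖exp ((m : ℝ)⁻¹ • x)‖ ≤ Real.exp ((m : ℝ)⁻¹ * r) := by
    refine (norm_exp_le_exp_norm _).trans (Real.exp_le_exp.mpr ?_)
    rw [norm_smul, Real.norm_of_nonneg (by positivity)]
    gcongr
  have hC : Real.exp ((m : ℝ)⁻¹ * r) ^ (m - 1) ≤ Real.exp r :=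
    calc Real.exp ((m : ℝ)⁻¹ * r) ^ (m - 1) ≤ Real.exp ((m : ℝ)⁻¹ * r) ^ m :=
          pow_le_pow_right₀ (Real.one_le_exp (by positivity [(norm_nonneg x).trans hxr]))
            (m.sub_le 1)
      _ = Real.exp r := by rw [← Real.exp_nat_mul, ← mul_assoc, mul_inv_cancel₀ hm', one_mul]
  rw [← hexp]
  refine (norm_pow_sub_pow_le ha hb m).trans ?_
  gcongr

theorem tendsto_pow_of_hasDerivAt_zero {F : ℝ → 𝔸} {x : 𝔸} {r : ℝ} (hF₀ : F 0 = 1)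
    (hF : HasDerivAt F x 0) (hFr : ∀ s, 0 ≤ s → ‖F s‖ ≤ Real.exp (s * r)) (hxr : ‖x‖ ≤ r) :
    Tendsto (fun m : ℕ => F (m : ℝ)⁻¹ ^ m) atTop (𝓝 (exp x)) := by
  set g : ℝ → 𝔸 := fun s => F s - exp (s • x)
  have hg : g =o[𝓝 0] fun s => s := by
    have hg' : HasDerivAt g 0 0 := by
      simpa using hF.fun_sub (hasDerivAt_exp_smul_const (𝕂 := ℝ) x 0)
    simpa [g, hF₀] using hasDerivAt_iff_isLittleO_nhds_zero.mp hg'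
  have hlim : Tendsto (fun m : ℕ => Real.exp r * (‖g (m : ℝ)⁻¹‖ / (m : ℝ)⁻¹)) atTop (𝓝 0) := by
    simpa using ((hg.norm_left.comp_tendsto tendsto_inv_atTop_nhds_zero_nat).tendsto_div_nhds_zero
      ).const_mul (Real.exp r)
  rw [tendsto_iff_norm_sub_tendsto_zero]
  refine squeeze_zero' (Eventually.of_forall fun _ => norm_nonneg _) ?_ hlim
  filter_upwards [eventually_ne_atTop 0] with m hm
  refine (norm_pow_sub_exp_le hm hxr (hFr _ (by positivity))).trans_eq ?_
  rw [div_inv_eq_mul]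
  ring

theorem tendsto_exp_smul_mul_one_add_smul_pow (x y : 𝔸) :
    Tendsto (fun m : ℕ => (exp ((m : ℝ)⁻¹ • x) * (1 + (m : ℝ)⁻¹ • y)) ^ m) atTop
      (𝓝 (exp (x + y))) := by
  refine tendsto_pow_of_hasDerivAt_zero (F := fun s : ℝ => exp (s • x) * (1 + s • y))
    (r := ‖x‖ + ‖y‖) (by simp) ?_ (fun s hs => ?_) (norm_add_le x y)
  · simpa using (hasDerivAt_exp_smul_const (𝕂 := ℝ) x 0).fun_mul
      (((hasDerivAt_id (0 : ℝ)).smul_const y).const_add 1)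
  · calc ‖exp (s • x) * (1 + s • y)‖ ≤ Real.exp (s * ‖x‖) * Real.exp (s * ‖y‖) := by
          refine norm_mul_le_of_le ?_ ?_
          · simpa [norm_smul, abs_of_nonneg hs] using norm_exp_le_exp_norm (s • x)
          · calc ‖1 + s • y‖ ≤ 1 + s * ‖y‖ := by
                  simpa [norm_smul, abs_of_nonneg hs] using norm_add_le (1 : 𝔸) (s • y)
              _ ≤ Real.exp (s * ‖y‖) := by linarith [Real.add_one_le_exp (s * ‖y‖)]
      _ = Real.exp (s * (‖x‖ + ‖y‖)) := by rw [← Real.exp_add, mul_add]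

end NormedSpace

end NormedRing

namespace ContinuousLinearMap

section Positive

variable {R E : Type*} [Semiring R] [AddCommGroup E] [PartialOrder E] [Module R E]
  [TopologicalSpace E] {P Q : E →L[R] E}

theorem pow_apply_nonneg (hP : ∀ x, 0 ≤ x → 0 ≤ P x) (m : ℕ) {x : E} (hx : 0 ≤ x) :
    0 ≤ (P ^ m) x := by
  induction m with
  | zero => simpa using hx
  | succ m ih => rw [pow_succ']; exact hP _ ih

theorem pow_apply_le_pow_apply [IsOrderedAddMonoid E] (hP : ∀ x, 0 ≤ x → 0 ≤ P x)
    (hPQ : ∀ x, 0 ≤ x → P x ≤ Q x) (m : ℕ) {x : E} (hx : 0 ≤ x) : (P ^ m) x ≤ (Q ^ m) x := by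
  induction m with
  | zero => simp
  | succ m ih =>
    have hQ_mono : Q ((P ^ m) x) ≤ Q ((Q ^ m) x) := by
      have hd : 0 ≤ (Q ^ m) x - (P ^ m) x := sub_nonneg.mpr ih
      simpa [map_sub] using (hP _ hd).trans (hPQ _ hd)
    rw [pow_succ', pow_succ']
    exact (hPQ _ (pow_apply_nonneg hP m hx)).trans hQ_mono

end Positive

section MulLeftRight

variable {R : Type*} [NormedRing R] [NormedAlgebra ℂ R] [CompleteSpace R]

theorem exp_mul (a : R) : exp (mul ℂ R a) = mul ℂ R (exp a) := by
  let _ : NormedAlgebra ℚ R := .restrictScalars ℚ ℂ R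
  let _ : Algebra ℚ (R →L[ℂ] R) := .restrictScalars ℚ ℂ _
  let L : R →+* (R →L[ℂ] R) :=
    { toFun := mul ℂ R
      map_one' := by ext; simp
      map_mul' := fun a b => by ext; simp [mul_assoc]
      map_zero' := map_zero _
      map_add' := map_add _ }
  exact (map_exp L (mul ℂ R).continuous a).symm

theorem exp_mul_flip (a : R) : exp ((mul ℂ R).flip a) = (mul ℂ R).flip (exp a) := by
  let _ : NormedAlgebra ℚ R := .restrictScalars ℚ ℂ R
  let _ : Algebra ℚ (R →L[ℂ] R) := .restrictScalars ℚ ℂ _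
  let L : Rᵐᵒᵖ →+* (R →L[ℂ] R) :=
    { toFun := fun a => (mul ℂ R).flip a.unop
      map_one' := by ext; simp
      map_mul' := fun a b => by ext; simp [mul_assoc]
      map_zero' := by simp
      map_add' := fun a b => by simp }
  simpa [L] using (map_exp L ((mul ℂ R).flip.continuous.comp MulOpposite.continuous_unop)
    (MulOpposite.op a)).symm

theorem exp_smul_apply_eq_of_apply_eq {B C : R} {Φ : R →L[ℂ] R}
    (hΦ : ∀ Z, Φ Z = B * Z + Z * C) (s : ℝ) (Z : R) :
    exp (s • Φ) Z = exp (s • B) * Z * exp (s • C) := by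
  let _ : NormedAlgebra ℚ (R →L[ℂ] R) := .restrictScalars ℚ ℂ _
  have hsΦ : s • Φ = mul ℂ R (s • B) + (mul ℂ R).flip (s • C) := by
    ext Z; simp [hΦ, smul_add]
  have hcomm : Commute (mul ℂ R (s • B)) ((mul ℂ R).flip (s • C)) := by
    ext Z; simp [mul_assoc]
  rw [hsΦ, exp_add_of_commute hcomm, exp_mul, exp_mul_flip]
  simp [mul_assoc]

end MulLeftRight

end ContinuousLinearMap

section OrderedBanachSpace

variable {E : Type*} [NormedAddCommGroup E] [NormedSpace ℂ E] [CompleteSpace E]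
  [PartialOrder E] [IsOrderedAddMonoid E] [PosSMulMono ℝ E]

theorem exp_smul_apply_le_exp_smul_add_apply (hE : IsClosed {x : E | 0 ≤ x}) {Φ U : E →L[ℂ] E}
    (hΦ : ∀ s : ℝ, 0 ≤ s → ∀ x, 0 ≤ x → 0 ≤ exp (s • Φ) x) (hU : ∀ x, 0 ≤ x → 0 ≤ U x)
    {t : ℝ} (ht : 0 ≤ t) {x : E} (hx : 0 ≤ x) : exp (t • Φ) x ≤ exp (t • (Φ + U)) x := by
  obtain _ | _ := subsingleton_or_nontrivial E
  · exact (Subsingleton.elim _ _).le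
  let P : ℕ → E →L[ℂ] E := fun m => exp ((m : ℝ)⁻¹ • t • Φ)
  let Q : ℕ → E →L[ℂ] E := fun m => P m * (1 + (m : ℝ)⁻¹ • t • U)
  have hP : ∀ m x, 0 ≤ x → 0 ≤ P m x := fun m x hx => by
    simpa only [P, smul_smul] using hΦ _ (by positivity) x hx
  have hPQ : ∀ m x, 0 ≤ x → P m x ≤ Q m x := fun m x hx => by
    have hUx : 0 ≤ ((m : ℝ)⁻¹ • t • U) x := by
      simpa [smul_smul] using smul_nonneg (by positivity : (0 : ℝ) ≤ (m : ℝ)⁻¹ * t) (hU x hx)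
    simpa [Q, map_add] using hP m _ hUx
  have hPm : ∀ m : ℕ, m ≠ 0 → P m ^ m = exp (t • Φ) := fun m hm => by
    let _ : NormedAlgebra ℚ (E →L[ℂ] E) := .restrictScalars ℚ ℂ _
    rw [← NormedSpace.exp_nsmul, ← Nat.cast_smul_eq_nsmul ℝ, smul_smul,
      mul_inv_cancel₀ (Nat.cast_ne_zero.mpr hm), one_smul]
  have hlim : Tendsto (fun m => (Q m ^ m) x) atTop (𝓝 (exp (t • (Φ + U)) x)) := by
    rw [smul_add]
    exact ((ContinuousLinearMap.apply ℂ E x).continuous.tendsto _).comp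
      (tendsto_exp_smul_mul_one_add_smul_pow (t • Φ) (t • U))
  have : OrderClosedTopology E := ⟨isClosed_le_of_isClosed_nonneg hE⟩
  refine ge_of_tendsto hlim ?_
  filter_upwards [eventually_ne_atTop 0] with m hm
  rw [← hPm m hm]
  exact ContinuousLinearMap.pow_apply_le_pow_apply (hP m) (hPQ m) m hx

end OrderedBanachSpace

namespace Matrix

open scoped MatrixOrder

variable {n 𝕜 : Type*} [Fintype n] [RCLike 𝕜]

theorem isClosed_setOf_nonneg : IsClosed {A : Matrix n n 𝕜 | 0 ≤ A} := by
  simp only [nonneg_iff_posSemidef, posSemidef_iff_dotProduct_mulVec, Set.ofPred_and,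
    Set.ofPred_forall]
  refine (isClosed_eq continuous_id.matrix_conjTranspose continuous_id).inter
    (isClosed_iInter fun x => isClosed_le continuous_const ?_)
  fun_prop

instance : PosSMulMono ℝ (Matrix n n 𝕜) where
  smul_le_smul_of_nonneg_left c hc A B hAB := by
    rw [le_iff, ← smul_sub]
    exact hAB.smul hc

end Matrix

/-- **Positivity comparison for the flow of `Λ` (equation (Pikksol), proof of Theorem 4.2).**
For `Λ(Z) = A Z + Z Aᵀ + U(Z)` with `U` positivity-preserving, the flow `exp(tΛ)` dominates
the flow `Z₀ ↦ e^{tA} Z₀ e^{tAᵀ}` of the Lyapunov part: for `t ≥ 0` and `Z₀` Hermitian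
positive semi-definite, `exp(tΛ)(Z₀) - e^{tA} Z₀ e^{tAᵀ}` is Hermitian positive
semi-definite; in particular so is `exp(tΛ)(Z₀)`. -/
theorem expLambda_dominates_lyapunov_flow
    {n : ℕ} (A : Matrix (Fin n) (Fin n) ℝ)
    (U Λ : Matrix (Fin n) (Fin n) ℂ →L[ℂ] Matrix (Fin n) (Fin n) ℂ)
    (hU : ∀ Z : Matrix (Fin n) (Fin n) ℂ, Z.PosSemidef → (U Z).PosSemidef)
    (hΛ : ∀ Z : Matrix (Fin n) (Fin n) ℂ,
      Λ Z = A.map Complex.ofReal * Z + Z * (A.map Complex.ofReal)ᵀ + U Z)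
    (t : ℝ) (ht : 0 ≤ t)
    (Z₀ : Matrix (Fin n) (Fin n) ℂ) (hZ₀ : Z₀.PosSemidef) :
    (NormedSpace.exp (t • Λ) Z₀
      - NormedSpace.exp (t • A.map Complex.ofReal) * Z₀
        * NormedSpace.exp (t • (A.map Complex.ofReal)ᵀ)).PosSemidef
    ∧ (NormedSpace.exp (t • Λ) Z₀).PosSemidef := by
  set B := A.map Complex.ofReal
  have hexpH : ∀ s : ℝ, (exp (s • B))ᴴ = exp (s • Bᵀ) := fun s => by
    rw [← exp_conjTranspose, conjTranspose_smul, star_trivial]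
    congr 2; ext; simp [B]
  -- The generic lemmas see the matrices through the Frobenius norm, whose instances agree with
  -- those of the statement only up to unfolding: they are applied in term mode to facts stated
  -- in the statement's own terms.
  have hΦ : ∀ Z, (Λ - U) Z = B * Z + Z * Bᵀ := fun Z => by simp [hΛ]
  have hflow : ∀ (s : ℝ) Z, exp (s • (Λ - U)) Z = exp (s • B) * Z * (exp (s • B))ᴴ := by
    intro s Z
    rw [hexpH]
    exact ContinuousLinearMap.exp_smul_apply_eq_of_apply_eq hΦ s Z
  open scoped MatrixOrder in
  have hdom : exp (t • (Λ - U)) Z₀ ≤ exp (t • (Λ - U + U)) Z₀ :=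
    exp_smul_apply_le_exp_smul_add_apply isClosed_setOf_nonneg
      (fun s _ Z hZ => (hflow s Z).symm ▸ (hZ.posSemidef.mul_mul_conjTranspose_same _).nonneg)
      (fun Z hZ => (hU Z hZ.posSemidef).nonneg) ht hZ₀.nonneg
  rw [sub_add_cancel, hflow, hexpH] at hdom
  have hlyap := hZ₀.mul_mul_conjTranspose_same (exp (t • B))
  rw [hexpH] at hlyap
  open scoped MatrixOrder in
  exact ⟨le_iff.mp hdom, (hlyap.nonneg.trans hdom).posSemidef⟩
end

section
/- Let n ≥ 1 and let P be a Hermitian positive semi-definite complex matrix of order n², regarded as an n×n array of n×n blocks P_{jk} (so P_{jk}* = P_{kj}). Then the off-diagonal blocks satisfy Σ_{1≤j≠k≤n} ‖P_{jk}‖_F² ≤ (1 − 1/n²)·(Tr P)². -/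
/-! Every 2×2 principal minor of a positive semi-definite matrix is nonnegative, so
`|P_IJ|² ≤ P_II P_JJ` and the squared Frobenius norm of `P` is at most `(Tr P)²`. The diagonal
blocks contain the diagonal entries, and by Cauchy–Schwarz the squares of these sum to at least
`(Tr P)² / n²`. The off-diagonal blocks carry the difference. -/

open Matrix
open scoped ComplexOrder

theorem Fintype.sum_sum_ite_ne_eq_sub {ι M : Type*} [Fintype ι] [DecidableEq ι] [AddCommGroup M]
    (f : ι → ι → M) :
    ∑ j, ∑ k, (if j ≠ k then f j k else 0) = ∑ j, ∑ k, f j k - ∑ j, f j j := by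
  simp only [← Finset.sum_filter, Finset.filter_ne, Finset.sum_erase_eq_sub (Finset.mem_univ _),
    Finset.sum_sub_distrib]

namespace Matrix

variable {ι κ 𝕜 : Type*} [RCLike 𝕜]

theorem PosSemidef.norm_apply_sq_le {A : Matrix ι ι 𝕜} (hA : A.PosSemidef) (i j : ι) :
    ‖A i j‖ ^ 2 ≤ RCLike.re (A i i) * RCLike.re (A j j) := by
  have hminor := (hA.submatrix ![i, j]).det_nonneg
  simp only [det_fin_two, submatrix_apply, cons_val_zero, cons_val_one,
    ← hA.isHermitian.apply j i, RCLike.star_def, RCLike.mul_conj] at hminor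
  rw [← hA.isHermitian.coe_re_apply_self i, ← hA.isHermitian.coe_re_apply_self j] at hminor
  exact_mod_cast sub_nonneg.mp hminor

variable [Fintype ι]

theorem PosSemidef.sum_norm_sq_le_re_trace_sq {A : Matrix ι ι 𝕜} (hA : A.PosSemidef) :
    ∑ i, ∑ j, ‖A i j‖ ^ 2 ≤ RCLike.re A.trace ^ 2 :=
  calc ∑ i, ∑ j, ‖A i j‖ ^ 2 ≤ ∑ i, ∑ j, RCLike.re (A i i) * RCLike.re (A j j) :=
        Finset.sum_le_sum fun i _ => Finset.sum_le_sum fun j _ => hA.norm_apply_sq_le i j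
    _ = RCLike.re A.trace ^ 2 := by
        rw [sq, trace, map_sum, Finset.sum_mul_sum]
        rfl

theorem re_trace_sq_le_card_mul_sum_norm_sq_diag (A : Matrix ι ι 𝕜) :
    RCLike.re A.trace ^ 2 ≤ Fintype.card ι * ∑ i, ‖A i i‖ ^ 2 :=
  calc RCLike.re A.trace ^ 2 ≤ Fintype.card ι * ∑ i, RCLike.re (A i i) ^ 2 := by
        simpa [trace] using sq_sum_le_card_mul_sum_sq (s := .univ) (f := fun i => RCLike.re (A i i))
    _ ≤ Fintype.card ι * ∑ i, ‖A i i‖ ^ 2 :=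
        mul_le_mul_of_nonneg_left (Finset.sum_le_sum fun i _ =>
          sq_le_sq' (neg_le_of_abs_le (RCLike.abs_re_le_norm _)) (RCLike.re_le_norm _))
          (Nat.cast_nonneg _)

variable [DecidableEq ι] [Fintype κ]

theorem PosSemidef.sum_offDiag_blocks_le {P : Matrix (ι × κ) (ι × κ) 𝕜} (hP : P.PosSemidef) :
    ∑ j, ∑ k, (if j ≠ k then ∑ a, ∑ b, ‖P (j, a) (k, b)‖ ^ 2 else 0)
      ≤ (1 - 1 / Fintype.card (ι × κ)) * RCLike.re P.trace ^ 2 := by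
  set blockNormSq : ι → ι → ℝ := fun j k => ∑ a, ∑ b, ‖P (j, a) (k, b)‖ ^ 2
  have hall : ∑ j, ∑ k, blockNormSq j k ≤ RCLike.re P.trace ^ 2 :=
    calc ∑ j, ∑ k, blockNormSq j k = ∑ I, ∑ J, ‖P I J‖ ^ 2 := by
          simp only [blockNormSq, Fintype.sum_prod_type]
          exact Finset.sum_congr rfl fun j _ => Finset.sum_comm
      _ ≤ RCLike.re P.trace ^ 2 := hP.sum_norm_sq_le_re_trace_sq
  have hdiag : RCLike.re P.trace ^ 2 / Fintype.card (ι × κ) ≤ ∑ j, blockNormSq j j :=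
    calc RCLike.re P.trace ^ 2 / Fintype.card (ι × κ) ≤ ∑ I, ‖P I I‖ ^ 2 :=
          div_le_of_le_mul₀ (Nat.cast_nonneg _) (by positivity)
            (by simpa only [mul_comm] using re_trace_sq_le_card_mul_sum_norm_sq_diag P)
      _ = ∑ j, ∑ a, ‖P (j, a) (j, a)‖ ^ 2 := Fintype.sum_prod_type _
      _ ≤ ∑ j, blockNormSq j j := by
          refine Finset.sum_le_sum fun j _ => Finset.sum_le_sum fun a _ => ?_
          exact Finset.single_le_sum (f := fun b => ‖P (j, a) (j, b)‖ ^ 2)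
            (fun _ _ => by positivity) (Finset.mem_univ a)
  rw [Fintype.sum_sum_ite_ne_eq_sub, one_sub_mul, one_div_mul_eq_div]
  linarith

end Matrix

theorem offdiagonal_block_bound_general
    {n : ℕ}
    (P : Matrix (Fin n × Fin n) (Fin n × Fin n) ℂ) (hP : P.PosSemidef) :
    ∑ j : Fin n, ∑ k : Fin n,
        (if j ≠ k then ∑ a : Fin n, ∑ b : Fin n, Complex.normSq (P (j, a) (k, b)) else 0)
      ≤ (1 - 1 / (n : ℝ) ^ 2) * P.trace.re ^ 2 := by
  simpa [Complex.normSq_eq_norm_sq, sq] using hP.sum_offDiag_blocks_le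

/-- **Bound on the off-diagonal blocks of a positive semi-definite block matrix (Section 4).**
If `P` is a Hermitian positive semi-definite complex matrix of order `n²`, regarded as an
`n×n` array of `n×n` blocks `P_{jk} = (P (j,a) (k,b))_{a,b}`, then
`∑_{j≠k} ‖P_{jk}‖_F² ≤ (1 - 1/n²) (Tr P)²`. -/
theorem offdiagonal_block_bound
    {n : ℕ} (hn : 1 ≤ n)
    (P : Matrix (Fin n × Fin n) (Fin n × Fin n) ℂ) (hP : P.PosSemidef) :
    ∑ j : Fin n, ∑ k : Fin n,
        (if j ≠ k then ∑ a : Fin n, ∑ b : Fin n, Complex.normSq (P (j, a) (k, b)) else 0)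
      ≤ (1 - 1 / (n : ℝ) ^ 2) * P.trace.re ^ 2 :=
  offdiagonal_block_bound_general P hP
end

section
/- Let A ∈ ℝ^{n×n}, λ > 0, and let G ∈ ℝ^{n×n} be a real symmetric positive definite matrix satisfying the Lyapunov inequality AG + GAᵀ ⪯ −2λG (i.e. AG + GAᵀ + 2λG is negative semi-definite). Then for every τ ≥ 0 and every matrix C ∈ ℝ^{n×n}: ‖e^{τA} C‖_F ≤ e^{−λτ} · sqrt(‖G‖) · ‖G^{−1/2} C‖_F, where ‖G‖ is the largest eigenvalue of G and G^{−1/2} is the inverse of the principal square root of G. Equivalently, the matrix E_τ := G^{−1/2} e^{τA} G^{1/2} is a contraction with operator norm ‖E_τ‖ ≤ e^{−λτ}. -/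
/-!
`V(x) = xᵀ G⁻¹ x` is a Lyapunov function for `ẋ = A x`: conjugating the inequality for `G` by
`G⁻¹` gives `Aᵀ G⁻¹ + G⁻¹ A ⪯ -2λ G⁻¹`, so `t ↦ e^{2λt} V(e^{tA} x)` is nonincreasing. Summed over
the columns of `C`, i.e. in trace form, this bounds `Tr((e^{τA}C)ᵀ G⁻¹ e^{τA}C)` by
`e^{-2λτ} Tr(Cᵀ G⁻¹ C) = e^{-2λτ} ‖G^{-1/2} C‖_F²`, and `G ⪯ g·1` gives `1 ⪯ g G⁻¹`, i.e.
`‖K‖_F² ≤ g Tr(Kᵀ G⁻¹ K)`.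
-/

open Matrix

namespace Matrix

variable {n : Type*} [Fintype n]

lemma trace_transpose_mul_mul_nonneg {M : Matrix n n ℝ} (hM : M.PosSemidef)
    (K : Matrix n n ℝ) : 0 ≤ (Kᵀ * M * K).trace := by
  simpa only [conjTranspose_eq_transpose_of_trivial] using
    (hM.conjTranspose_mul_mul_same K).trace_nonneg

variable [DecidableEq n]

lemma PosDef.transpose_inv {G : Matrix n n ℝ} (hG : G.PosDef) : (G⁻¹)ᵀ = G⁻¹ := by
  rw [transpose_nonsing_inv, ← conjTranspose_eq_transpose_of_trivial, hG.1.eq]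

lemma PosDef.neg_lyapunov_inv_posSemidef {A G : Matrix n n ℝ} {c : ℝ} (hG : G.PosDef)
    (h : (-(A * G + G * Aᵀ + c • G)).PosSemidef) :
    (-(Aᵀ * G⁻¹ + G⁻¹ * A + c • G⁻¹)).PosSemidef := by
  have hdet : IsUnit G.det := hG.isUnit.map detMonoidHom
  convert h.conjTranspose_mul_mul_same G⁻¹ using 1
  rw [conjTranspose_eq_transpose_of_trivial, hG.transpose_inv]
  simp only [Matrix.mul_neg, Matrix.neg_mul, Matrix.mul_add, Matrix.add_mul, Matrix.mul_smul,
    Matrix.smul_mul, ← Matrix.mul_assoc, nonsing_inv_mul G hdet, Matrix.one_mul]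
  simp only [Matrix.mul_assoc, mul_nonsing_inv G hdet, Matrix.mul_one]
  abel

section SquareRoot

open scoped MatrixOrder

lemma PosSemidef.eigenvectorUnitary_mul_diagonal_sqrt_mul_star {G : Matrix n n ℝ}
    (hG : G.PosSemidef) :
    (hG.1.eigenvectorUnitary : Matrix n n ℝ) *
      diagonal ((RCLike.ofReal : ℝ → ℝ) ∘ Real.sqrt ∘ hG.1.eigenvalues) *
      (star hG.1.eigenvectorUnitary : Matrix n n ℝ) = CFC.sqrt G := by
  rw [CFC.sqrt_eq_real_sqrt G hG.nonneg, cfcₙ_eq_cfc, hG.1.cfc_eq]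
  rfl

lemma PosSemidef.nonneg_of_mem_spectrum {G : Matrix n n ℝ} (hG : G.PosSemidef) {μ : ℝ}
    (hμ : μ ∈ spectrum ℝ G) : 0 ≤ μ :=
  spectrum_nonneg_of_nonneg hG.nonneg hμ

lemma PosDef.transpose_inv_sqrt {G : Matrix n n ℝ} (hG : G.PosDef) :
    ((CFC.sqrt G)⁻¹)ᵀ = (CFC.sqrt G)⁻¹ := by
  rw [hG.posSemidef.inv_sqrt, ← conjTranspose_eq_transpose_of_trivial]
  exact (CFC.sqrt_nonneg _).posSemidef.1

lemma PosDef.inv_sqrt_mul_inv_sqrt {G : Matrix n n ℝ} (hG : G.PosDef) :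
    (CFC.sqrt G)⁻¹ * (CFC.sqrt G)⁻¹ = G⁻¹ := by
  rw [← Matrix.mul_inv_rev, CFC.sqrt_mul_sqrt_self G hG.posSemidef.nonneg]

lemma PosDef.inv_sqrt_mul_mul_inv_sqrt {G : Matrix n n ℝ} (hG : G.PosDef) :
    (CFC.sqrt G)⁻¹ * G * (CFC.sqrt G)⁻¹ = 1 := by
  have hS : IsUnit (CFC.sqrt G).det := by
    rw [← isUnit_iff_isUnit_det]
    exact (CFC.isUnit_sqrt_iff G hG.posSemidef.nonneg).mpr hG.isUnit
  calc (CFC.sqrt G)⁻¹ * G * (CFC.sqrt G)⁻¹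
      = (CFC.sqrt G)⁻¹ * CFC.sqrt G * (CFC.sqrt G * (CFC.sqrt G)⁻¹) := by
        rw [Matrix.mul_assoc _ (CFC.sqrt G), ← Matrix.mul_assoc (CFC.sqrt G) (CFC.sqrt G),
          CFC.sqrt_mul_sqrt_self G hG.posSemidef.nonneg, Matrix.mul_assoc]
    _ = 1 := by rw [nonsing_inv_mul _ hS, mul_nonsing_inv _ hS, Matrix.one_mul]

lemma PosDef.posSemidef_smul_inv_sub_one {G : Matrix n n ℝ} (hG : G.PosDef) {g : ℝ}
    (hg : ∀ μ ∈ spectrum ℝ G, μ ≤ g) : (g • G⁻¹ - 1).PosSemidef := by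
  have hgG : (g • 1 - G).PosSemidef := by
    simpa only [le_iff, Algebra.algebraMap_eq_smul_one] using
      le_algebraMap_of_spectrum_le hg hG.1.isSelfAdjoint
  convert hgG.conjTranspose_mul_mul_same (CFC.sqrt G)⁻¹ using 1
  rw [conjTranspose_eq_transpose_of_trivial, hG.transpose_inv_sqrt, Matrix.mul_sub,
    Matrix.sub_mul, hG.inv_sqrt_mul_mul_inv_sqrt, Matrix.mul_smul, Matrix.smul_mul,
    Matrix.mul_one, hG.inv_sqrt_mul_inv_sqrt]

lemma PosDef.trace_transpose_mul_self_le {G : Matrix n n ℝ} (hG : G.PosDef) {g : ℝ}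
    (hg : ∀ μ ∈ spectrum ℝ G, μ ≤ g) (K : Matrix n n ℝ) :
    (Kᵀ * K).trace ≤ g * (Kᵀ * G⁻¹ * K).trace := by
  simpa only [Matrix.mul_sub, Matrix.sub_mul, Matrix.mul_smul, Matrix.smul_mul, Matrix.mul_one,
    trace_sub, trace_smul, smul_eq_mul, sub_nonneg] using
    trace_transpose_mul_mul_nonneg (hG.posSemidef_smul_inv_sub_one hg) K

lemma PosDef.trace_inv_sqrt_mul {G : Matrix n n ℝ} (hG : G.PosDef) (C : Matrix n n ℝ) :
    (((CFC.sqrt G)⁻¹ * C)ᵀ * ((CFC.sqrt G)⁻¹ * C)).trace = (Cᵀ * G⁻¹ * C).trace := by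
  rw [transpose_mul, hG.transpose_inv_sqrt, Matrix.mul_assoc, ← Matrix.mul_assoc (CFC.sqrt G)⁻¹,
    hG.inv_sqrt_mul_inv_sqrt, Matrix.mul_assoc]

end SquareRoot

section Calculus

-- Differentiating matrix-valued curves needs a normed ring structure; any norm will do.
attribute [local instance] Matrix.linftyOpNormedAddCommGroup Matrix.linftyOpNormedRing
  Matrix.linftyOpNormedAlgebra

lemma hasDerivAt_trace_transpose_mul_mul {F : ℝ → Matrix n n ℝ} {A : Matrix n n ℝ}
    (M : Matrix n n ℝ) {t : ℝ} (hF : HasDerivAt F (A * F t) t) :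
    HasDerivAt (fun s => ((F s)ᵀ * M * F s).trace)
      (((F t)ᵀ * (Aᵀ * M + M * A) * F t).trace) t := by
  have hFT : HasDerivAt (fun s => (F s)ᵀ) (A * F t)ᵀ t :=
    (transposeLinearEquiv n n ℝ ℝ).toLinearMap.toContinuousLinearMap.hasFDerivAt.comp_hasDerivAt
      t hF
  refine ((traceLinearMap n ℝ ℝ).toContinuousLinearMap.hasFDerivAt.comp_hasDerivAt t
    ((hFT.mul_const M).mul hF)).congr_deriv ?_
  change ((A * F t)ᵀ * M * F t + (F t)ᵀ * M * (A * F t)).trace = _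
  simp only [transpose_mul, Matrix.mul_add, Matrix.add_mul, Matrix.mul_assoc]

lemma lyapunov_trace_decay {A M : Matrix n n ℝ} {lam : ℝ}
    (hM : (-(Aᵀ * M + M * A + (2 * lam) • M)).PosSemidef) (K : Matrix n n ℝ) {τ : ℝ}
    (hτ : 0 ≤ τ) :
    ((NormedSpace.exp (τ • A) * K)ᵀ * M * (NormedSpace.exp (τ • A) * K)).trace
      ≤ Real.exp (-(2 * lam * τ)) * (Kᵀ * M * K).trace := by
  set F : ℝ → Matrix n n ℝ := fun s => NormedSpace.exp (s • A) * K
  have hF : ∀ t, HasDerivAt F (A * F t) t := fun t => by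
    have h := (hasDerivAt_exp_smul_const' A t).mul_const K
    rw [Matrix.mul_assoc] at h
    exact h
  have hφ : ∀ t, HasDerivAt (fun s => Real.exp (2 * lam * s) * ((F s)ᵀ * M * F s).trace)
      (Real.exp (2 * lam * t) * ((F t)ᵀ * (Aᵀ * M + M * A + (2 * lam) • M) * F t).trace) t := by
    intro t
    have hexp : HasDerivAt (fun s => Real.exp (2 * lam * s))
        (Real.exp (2 * lam * t) * (2 * lam)) t := by
      simpa using ((hasDerivAt_id t).const_mul (2 * lam)).exp
    refine (hexp.mul (hasDerivAt_trace_transpose_mul_mul M (hF t))).congr_deriv ?_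
    simp only [Matrix.mul_add, Matrix.add_mul, trace_add, Matrix.mul_smul, Matrix.smul_mul,
      trace_smul, smul_eq_mul]
    ring
  have hanti : Antitone fun s => Real.exp (2 * lam * s) * ((F s)ᵀ * M * F s).trace := by
    refine antitone_of_deriv_nonpos (fun t => (hφ t).differentiableAt) fun t => ?_
    rw [(hφ t).deriv]
    have hnonpos := trace_transpose_mul_mul_nonneg hM (F t)
    simp only [Matrix.mul_neg, Matrix.neg_mul, trace_neg, neg_nonneg] at hnonpos
    exact mul_nonpos_of_nonneg_of_nonpos (Real.exp_nonneg _) hnonpos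
  have h := hanti hτ
  simp only [F, mul_zero, Real.exp_zero, one_mul, zero_smul, NormedSpace.exp_zero] at h
  rw [Real.exp_neg, ← div_eq_inv_mul, le_div_iff₀ (Real.exp_pos _), mul_comm]
  exact h

end Calculus

end Matrix

theorem lyapunov_contraction_estimate_general
    {n : ℕ} (A G : Matrix (Fin n) (Fin n) ℝ) (lam : ℝ) (hG : G.PosDef)
    (hLyap : (-(A * G + G * Aᵀ + (2 * lam) • G)).PosSemidef)
    (g : ℝ) (hg_mem : g ∈ spectrum ℝ G) (hg_max : ∀ μ ∈ spectrum ℝ G, μ ≤ g)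
    (τ : ℝ) (hτ : 0 ≤ τ) (C : Matrix (Fin n) (Fin n) ℝ) :
    Real.sqrt ((NormedSpace.exp (τ • A) * C)ᵀ * (NormedSpace.exp (τ • A) * C)).trace
      ≤ Real.exp (-lam * τ) * Real.sqrt g *
        Real.sqrt (((((hG.posSemidef.1.eigenvectorUnitary : Matrix (Fin n) (Fin n) ℝ) *
          diagonal ((RCLike.ofReal : ℝ → ℝ) ∘ Real.sqrt ∘ hG.posSemidef.1.eigenvalues) *
          (star hG.posSemidef.1.eigenvectorUnitary : Matrix (Fin n) (Fin n) ℝ))⁻¹ * C)ᵀ * (((hG.posSemidef.1.eigenvectorUnitary : Matrix (Fin n) (Fin n) ℝ) *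
          diagonal ((RCLike.ofReal : ℝ → ℝ) ∘ Real.sqrt ∘ hG.posSemidef.1.eigenvalues) *
          (star hG.posSemidef.1.eigenvectorUnitary : Matrix (Fin n) (Fin n) ℝ))⁻¹ * C)).trace) := by
  rw [hG.posSemidef.eigenvectorUnitary_mul_diagonal_sqrt_mul_star, hG.trace_inv_sqrt_mul]
  set E := NormedSpace.exp (τ • A)
  have hg : 0 ≤ g := hG.posSemidef.nonneg_of_mem_spectrum hg_mem
  have hexp : Real.exp (-(2 * lam * τ)) = Real.exp (-lam * τ) ^ 2 := by
    rw [← Real.exp_nat_mul]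
    ring_nf
  calc _ ≤ Real.sqrt (g * ((E * C)ᵀ * G⁻¹ * (E * C)).trace) :=
        Real.sqrt_le_sqrt (hG.trace_transpose_mul_self_le hg_max _)
    _ ≤ Real.sqrt (g * (Real.exp (-lam * τ) ^ 2 * (Cᵀ * G⁻¹ * C).trace)) := by
        rw [← hexp]
        gcongr
        exact lyapunov_trace_decay (hG.neg_lyapunov_inv_posSemidef hLyap) C hτ
    _ = Real.exp (-lam * τ) * Real.sqrt g * Real.sqrt (Cᵀ * G⁻¹ * C).trace := by
        rw [Real.sqrt_mul hg, Real.sqrt_mul (sq_nonneg _), Real.sqrt_sq (Real.exp_nonneg _)]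
        ring

/-- **Contraction estimate from the algebraic Lyapunov inequality (equations (contr),
(contr1) of Section 5).** If `G ≻ 0` is real symmetric with `A G + G Aᵀ ⪯ -2 λ G`
(`λ > 0`), and `g` is the largest eigenvalue of `G` (its operator norm), then for every
`τ ≥ 0` and `C ∈ ℝ^{n×n}`, the Frobenius norms satisfy
`‖e^{τA} C‖_F ≤ e^{-λτ} √g ‖G^{-1/2} C‖_F`, where `G^{-1/2}` is the inverse of the
principal square root of `G`, and `‖K‖_F = √(Tr(Kᵀ K))`. -/
theorem lyapunov_contraction_estimate
    {n : ℕ} (A G : Matrix (Fin n) (Fin n) ℝ) (lam : ℝ) (hlam : 0 < lam)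
    (hGs : G.IsSymm) (hG : G.PosDef)
    (hLyap : (-(A * G + G * Aᵀ + (2 * lam) • G)).PosSemidef)
    (g : ℝ) (hg_mem : g ∈ spectrum ℝ G) (hg_max : ∀ μ ∈ spectrum ℝ G, μ ≤ g)
    (τ : ℝ) (hτ : 0 ≤ τ) (C : Matrix (Fin n) (Fin n) ℝ) :
    Real.sqrt ((NormedSpace.exp (τ • A) * C)ᵀ * (NormedSpace.exp (τ • A) * C)).trace
      ≤ Real.exp (-lam * τ) * Real.sqrt g *
        Real.sqrt (((((hG.posSemidef.1.eigenvectorUnitary : Matrix (Fin n) (Fin n) ℝ) *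
          diagonal ((RCLike.ofReal : ℝ → ℝ) ∘ Real.sqrt ∘ hG.posSemidef.1.eigenvalues) *
          (star hG.posSemidef.1.eigenvectorUnitary : Matrix (Fin n) (Fin n) ℝ))⁻¹ * C)ᵀ * (((hG.posSemidef.1.eigenvectorUnitary : Matrix (Fin n) (Fin n) ℝ) *
          diagonal ((RCLike.ofReal : ℝ → ℝ) ∘ Real.sqrt ∘ hG.posSemidef.1.eigenvalues) *
          (star hG.posSemidef.1.eigenvectorUnitary : Matrix (Fin n) (Fin n) ℝ))⁻¹ * C)).trace) :=
  lyapunov_contraction_estimate_general A G lam hG hLyap g hg_mem hg_max τ hτ C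
end

section
/- Let α ∈ ℝ^{n×n} be symmetric positive definite with principal square root √α, V ∈ ℂ^{n×n} unitary with columns v_1,...,v_n, ω_1,...,ω_n ∈ ℝ pairwise distinct, A_0 := √α V diag(iω_1,...,iω_n) V* (√α)^{−1}, 𝒜 ∈ ℝ^{n×n}, A_ε := A_0 + ε²𝒜, and ν_k := v_k* (√α)^{−1} 𝒜 √α v_k. Suppose ω_{k₀} = 0 for some index k₀ and Re ν_k < 0 for all k = 1,...,n, and let b ∈ ℝ^n. Then for all sufficiently small ε > 0 the matrix A_ε is invertible, and the vectors μ_ε := −ε² A_ε^{−1} b converge, as ε → 0+, to −(1/ν_{k₀}) · √α · v_{k₀} v_{k₀}* · (√α)^{−1} · b. -/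
open Matrix

/-- The perturbed dynamics matrix `A_ε = A₀ + ε² 𝒜` of the weak-coupling formulation, where
`A₀ = √α · V · diag(i ω₁, ..., i ωₙ) · V* · (√α)⁻¹` is the isolated dynamics matrix. -/
noncomputable def weakCouplingA {n : ℕ} (sqrtα : Matrix (Fin n) (Fin n) ℝ)
    (V : Matrix (Fin n) (Fin n) ℂ) (ω : Fin n → ℝ)
    (𝒜 : Matrix (Fin n) (Fin n) ℝ) (ε : ℝ) : Matrix (Fin n) (Fin n) ℂ :=
  sqrtα.map Complex.ofReal * V * Matrix.diagonal (fun k => (ω k : ℂ) * Complex.I) * Vᴴ *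
      (sqrtα.map Complex.ofReal)⁻¹
    + ((ε : ℂ) ^ 2) • 𝒜.map Complex.ofReal

/-- The first-order perturbation coefficients `ν_k = v_k* (√α)⁻¹ 𝒜 √α v_k`, where `v_k` is the
`k`-th column of `V`. -/
noncomputable def weakCouplingNu {n : ℕ} (sqrtα : Matrix (Fin n) (Fin n) ℝ)
    (V : Matrix (Fin n) (Fin n) ℂ) (𝒜 : Matrix (Fin n) (Fin n) ℝ) (k : Fin n) : ℂ :=
  star (fun i => V i k) ⬝ᵥ
    (((sqrtα.map Complex.ofReal)⁻¹ * 𝒜.map Complex.ofReal * sqrtα.map Complex.ofReal).mulVec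
      fun i => V i k)

set_option maxHeartbeats 2000000 in
theorem weak_coupling_invariant_state_limit_aux
    {n : ℕ} (α sqrtα 𝒜 : Matrix (Fin n) (Fin n) ℝ)
    (hαs : α.IsSymm) (hα : α.PosDef)
    (hsq : sqrtα.PosSemidef) (hsq2 : sqrtα * sqrtα = α)
    (V : Matrix (Fin n) (Fin n) ℂ) (hV : V ∈ Matrix.unitaryGroup (Fin n) ℂ)
    (ω : Fin n → ℝ) (hω : Function.Injective ω)
    (k₀ : Fin n) (hk₀ : ω k₀ = 0)
    (hν : ∀ k, (weakCouplingNu sqrtα V 𝒜 k).re < 0)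
    (b : Fin n → ℝ) :
    (∀ᶠ ε in nhdsWithin (0 : ℝ) (Set.Ioi 0), IsUnit (weakCouplingA sqrtα V ω 𝒜 ε).det) ∧
    Filter.Tendsto
      (fun ε : ℝ => (-(ε : ℂ) ^ 2) •
        ((weakCouplingA sqrtα V ω 𝒜 ε)⁻¹.mulVec fun i => (b i : ℂ)))
      (nhdsWithin (0 : ℝ) (Set.Ioi 0))
      (nhds ((-(1 : ℂ) / weakCouplingNu sqrtα V 𝒜 k₀) •
        ((sqrtα.map Complex.ofReal *
            Matrix.vecMulVec (fun i => V i k₀) (star fun i => V i k₀) *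
            (sqrtα.map Complex.ofReal)⁻¹).mulVec fun i => (b i : ℂ)))) := by

  classical
  have hVl : Vᴴ * V = 1 := by
    simpa [Matrix.star_eq_conjTranspose] using Matrix.mem_unitaryGroup_iff'.mp hV
  have hVr : V * Vᴴ = 1 := by
    simpa [Matrix.star_eq_conjTranspose] using Matrix.mem_unitaryGroup_iff.mp hV
  set SC : Matrix (Fin n) (Fin n) ℂ := sqrtα.map Complex.ofReal with hSCdef
  set AC : Matrix (Fin n) (Fin n) ℂ := 𝒜.map Complex.ofReal with hACdef
  set bC : Fin n → ℂ := fun i => (b i : ℂ) with hbCdef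
  set v : Fin n → ℂ := fun i => V i k₀ with hvdef
  set ν : ℂ := weakCouplingNu sqrtα V 𝒜 k₀ with hνdef
  have hν0 : ν ≠ 0 := by
    intro h
    have h2 := hν k₀
    rw [← hνdef, h] at h2
    simp at h2
  have hdets : sqrtα.det ≠ 0 := by
    intro h
    have h2 := hα.det_pos
    rw [← hsq2, Matrix.det_mul, h, mul_zero] at h2
    exact lt_irrefl _ h2
  have hdetSC : SC.det ≠ 0 := by
    have h1 : (Complex.ofRealHom : ℝ →+* ℂ) sqrtα.det = SC.det := by
      rw [RingHom.map_det]; rfl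
    rw [← h1]
    exact Complex.ofReal_ne_zero.mpr hdets
  have hSCu : IsUnit SC.det := isUnit_iff_ne_zero.mpr hdetSC
  have hSC1 : SC * SC⁻¹ = 1 := Matrix.mul_nonsing_inv _ hSCu
  have hSC2 : SC⁻¹ * SC = 1 := Matrix.nonsing_inv_mul _ hSCu
  set D : Matrix (Fin n) (Fin n) ℂ :=
    Matrix.diagonal (fun k => (ω k : ℂ) * Complex.I) with hDdef
  set M : Matrix (Fin n) (Fin n) ℂ := Vᴴ * (SC⁻¹ * AC * SC) * V with hMdef
  set P : Matrix (Fin n) (Fin n) ℂ := SC * V with hPdef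
  set Pinv : Matrix (Fin n) (Fin n) ℂ := Vᴴ * SC⁻¹ with hPinvdef
  have hP1 : P * Pinv = 1 := by
    rw [hPdef, hPinvdef]
    calc SC * V * (Vᴴ * SC⁻¹) = SC * (V * Vᴴ) * SC⁻¹ := by simp only [Matrix.mul_assoc]
      _ = 1 := by rw [hVr, Matrix.mul_one, hSC1]
  have hP2 : Pinv * P = 1 := by
    rw [hPdef, hPinvdef]
    calc Vᴴ * SC⁻¹ * (SC * V) = Vᴴ * (SC⁻¹ * SC) * V := by simp only [Matrix.mul_assoc]
      _ = 1 := by rw [hSC2, Matrix.mul_one, hVl]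
  set B : ℝ → Matrix (Fin n) (Fin n) ℂ := fun ε => D + ((ε : ℂ) ^ 2) • M with hBdef
  have hconj : ∀ ε : ℝ, weakCouplingA sqrtα V ω 𝒜 ε = P * B ε * Pinv := by
    intro ε
    have hPMP : P * M * Pinv = AC := by
      rw [hPdef, hMdef, hPinvdef]
      calc SC * V * (Vᴴ * (SC⁻¹ * AC * SC) * V) * (Vᴴ * SC⁻¹)
          = SC * (V * Vᴴ) * ((SC⁻¹ * AC * SC) * ((V * Vᴴ) * SC⁻¹)) := by
            simp only [Matrix.mul_assoc]
        _ = SC * ((SC⁻¹ * AC * SC) * SC⁻¹) := by rw [hVr, Matrix.mul_one, Matrix.one_mul]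
        _ = (SC * SC⁻¹) * (AC * (SC * SC⁻¹)) := by simp only [Matrix.mul_assoc]
        _ = AC := by rw [hSC1, Matrix.mul_one, Matrix.one_mul]
    have hexp : P * B ε * Pinv = P * D * Pinv + ((ε : ℂ) ^ 2) • (P * M * Pinv) := by
      rw [hBdef]
      rw [Matrix.mul_add, Matrix.add_mul, Matrix.mul_smul, Matrix.smul_mul]
    rw [hexp, hPMP]
    show SC * V * D * Vᴴ * SC⁻¹ + ((ε : ℂ) ^ 2) • AC = _
    congr 1
    rw [hPdef, hPinvdef]
    simp only [Matrix.mul_assoc]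
  -- ν as a diagonal entry of M
  have gen : ∀ N : Matrix (Fin n) (Fin n) ℂ,
      (star (fun i => V i k₀) ⬝ᵥ N.mulVec fun i => V i k₀) = (Vᴴ * N * V) k₀ k₀ := by
    intro N
    simp only [Matrix.mul_apply, Matrix.conjTranspose_apply, dotProduct, Matrix.mulVec,
      Pi.star_apply, Finset.sum_mul, Finset.mul_sum, mul_assoc]
    rw [Finset.sum_comm]
  have hνM : ν = M k₀ k₀ := by
    rw [hνdef, hMdef]
    exact gen (SC⁻¹ * AC * SC)
  set δ : ℝ → Fin n → ℂ :=
    fun ε k => if k = k₀ then 1 else (ε : ℂ) ^ 2 / ((ω k : ℂ) * Complex.I) with hδdef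
  set Q : Matrix (Fin n) (Fin n) ℂ :=
    Matrix.diagonal (fun k => if k = k₀ then 1 else 0) with hQdef
  have hQ0 : Matrix.diagonal (δ 0) = Q := by
    rw [hQdef]
    congr 1
    funext k
    by_cases hk : k = k₀ <;> simp [hδdef, hk]
  set F : ℝ → Matrix (Fin n) (Fin n) ℂ :=
    fun ε => (1 - Q) + M * Matrix.diagonal (δ ε) with hFdef
  have hωne : ∀ k, k ≠ k₀ → (ω k : ℂ) * Complex.I ≠ 0 := by
    intro k hk
    have h3 : ω k ≠ 0 := fun h => hk (hω (h.trans hk₀.symm))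
    simp [Complex.ext_iff, h3, Complex.I_ne_zero]
  have key1 : ∀ ε : ℝ, B ε * Matrix.diagonal (δ ε) = ((ε : ℂ) ^ 2) • F ε := by
    intro ε
    have hDδ : D * Matrix.diagonal (δ ε) = ((ε : ℂ) ^ 2) • (1 - Q) := by
      rw [hDdef, Matrix.diagonal_mul_diagonal]
      ext i j
      by_cases hij : i = j
      · subst hij
        by_cases hi : i = k₀
        · subst hi
          simp [hδdef, hQdef, hk₀]
        · simp only [Matrix.diagonal_apply_eq, hδdef, if_neg hi, Matrix.smul_apply,
            Matrix.sub_apply, Matrix.one_apply_eq, hQdef, Matrix.diagonal_apply_eq,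
            if_neg hi, smul_eq_mul]
          rw [mul_comm, div_mul_cancel₀ _ (hωne i hi)]
          ring
      · simp [Matrix.diagonal_apply_ne _ hij, hQdef, Matrix.one_apply_ne hij]
    rw [hBdef]
    rw [Matrix.add_mul, Matrix.smul_mul, hDδ, hFdef, smul_add]
  have hF0 : F 0 = (1 : Matrix (Fin n) (Fin n) ℂ).updateCol k₀ (fun i => M i k₀) := by
    ext i j
    rw [hFdef]
    by_cases hj : j = k₀
    · simp [Matrix.updateCol_apply, Matrix.sub_apply, Matrix.one_apply,
        Matrix.mul_diagonal, Matrix.diagonal_apply, hδdef, hQdef, hj] <;>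
        split_ifs <;> simp_all
    · simp only [Matrix.updateCol_apply, if_neg hj, Matrix.add_apply, Matrix.sub_apply,
        Matrix.mul_diagonal, hδdef, hQdef, Matrix.diagonal_apply, if_neg hj]
      by_cases hij : i = j
      · simp [hij, hj]
      · simp [Matrix.one_apply_ne hij, hij]
  have hdetF0 : (F 0).det = ν := by
    rw [hF0, ← Matrix.cramer_apply, Matrix.cramer_one, hνM]
    rfl
  have hQF : Q * F 0 = ν • Q := by
    rw [hνM, hF0, hQdef]
    ext i j
    rw [Matrix.diagonal_mul]
    simp only [Matrix.smul_apply, Matrix.diagonal_apply, smul_eq_mul,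
      Matrix.updateCol_apply]
    by_cases hi : i = k₀
    · by_cases hj : j = k₀
      · rw [if_pos hi, one_mul, if_pos hj, hi, hj]; simp
      · have hij : i ≠ j := fun hc => hj (hc ▸ hi)
        rw [if_pos hi, one_mul, if_neg hj, Matrix.one_apply_ne hij, if_neg hij, mul_zero]
    · rw [if_neg hi, zero_mul]
      by_cases hij : i = j
      · simp [hij, hi]
      · simp [hij]
  have hQadj : Q * (F 0).adjugate = Q := by
    have h1 : ν • (Q * (F 0).adjugate) = ν • Q := by
      calc ν • (Q * (F 0).adjugate) = (ν • Q) * (F 0).adjugate := (Matrix.smul_mul _ _ _).symm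
        _ = Q * (F 0 * (F 0).adjugate) := by rw [← hQF, Matrix.mul_assoc]
        _ = Q * ((F 0).det • 1) := by rw [Matrix.mul_adjugate]
        _ = (F 0).det • (Q * 1) := by rw [Matrix.mul_smul]
        _ = ν • Q := by rw [hdetF0, Matrix.mul_one]
    exact smul_right_injective _ hν0 h1
  -- continuity
  have hδc : Continuous δ := by
    rw [hδdef]
    apply continuous_pi
    intro k
    by_cases hk : k = k₀
    · simp only [if_pos hk]; exact continuous_const
    · simp only [if_neg hk]
      exact (Complex.continuous_ofReal.pow 2).div_const _
  have hFc : Continuous F := by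
    rw [hFdef]
    exact continuous_const.add (continuous_const.matrix_mul hδc.matrix_diagonal)
  set W : ℝ → Fin n → ℂ :=
    fun ε => (P * (Matrix.diagonal (δ ε) * (F ε).adjugate) * Pinv).mulVec bC with hWdef
  set h : ℝ → Fin n → ℂ := fun ε => (-((F ε).det)⁻¹) • W ε with hhdef
  have hWc : Continuous W := by
    rw [hWdef]
    exact ((continuous_const.matrix_mul
      ((hδc.matrix_diagonal).matrix_mul hFc.matrix_adjugate)).matrix_mul
        continuous_const).matrix_mulVec continuous_const
  have hdetF0' : (F 0).det ≠ 0 := by rw [hdetF0]; exact hν0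
  have hhc : ContinuousAt h 0 := by
    rw [hhdef]
    exact (((hFc.matrix_det.continuousAt).inv₀ hdetF0').neg).smul hWc.continuousAt
  -- the eventual good set
  have hEv : ∀ᶠ ε in nhdsWithin (0 : ℝ) (Set.Ioi 0), (F ε).det ≠ 0 ∧ 0 < ε := by
    have h1 : ∀ᶠ ε in nhds (0 : ℝ), (F ε).det ≠ 0 :=
      (hFc.matrix_det.continuousAt).eventually_ne hdetF0'
    have h2 : ∀ᶠ ε in nhdsWithin (0 : ℝ) (Set.Ioi 0), ε ∈ Set.Ioi (0 : ℝ) :=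
      eventually_mem_nhdsWithin
    exact (eventually_nhdsWithin_of_eventually_nhds h1).and (h2.mono fun ε hε => hε)
  -- the key pointwise identity
  have key : ∀ ε : ℝ, (F ε).det ≠ 0 → 0 < ε →
      IsUnit (weakCouplingA sqrtα V ω 𝒜 ε).det ∧
        (-(ε : ℂ) ^ 2) • ((weakCouplingA sqrtα V ω 𝒜 ε)⁻¹.mulVec bC) = h ε := by
    intro ε hdF hε
    have hε2 : ((ε : ℂ) ^ 2) ≠ 0 := pow_ne_zero 2 (Complex.ofReal_ne_zero.mpr hε.ne')
    have hFu : IsUnit (F ε).det := isUnit_iff_ne_zero.mpr hdF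
    have hFinv : F ε * (F ε)⁻¹ = 1 := Matrix.mul_nonsing_inv _ hFu
    have hBR : B ε * (((ε : ℂ) ^ 2)⁻¹ • (Matrix.diagonal (δ ε) * (F ε)⁻¹)) = 1 := by
      rw [Matrix.mul_smul, ← Matrix.mul_assoc, key1 ε, Matrix.smul_mul, smul_smul,
        inv_mul_cancel₀ hε2, one_smul, hFinv]
    have hBu : IsUnit (B ε).det := Matrix.isUnit_det_of_right_inverse hBR
    have hBinv : (B ε)⁻¹ = ((ε : ℂ) ^ 2)⁻¹ • (Matrix.diagonal (δ ε) * (F ε)⁻¹) :=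
      Matrix.inv_eq_right_inv hBR
    have hAR : weakCouplingA sqrtα V ω 𝒜 ε * (P * (B ε)⁻¹ * Pinv) = 1 := by
      rw [hconj ε]
      calc P * B ε * Pinv * (P * (B ε)⁻¹ * Pinv)
          = P * (B ε * ((Pinv * P) * ((B ε)⁻¹ * Pinv))) := by simp only [Matrix.mul_assoc]
        _ = 1 := by
            rw [hP2, Matrix.one_mul, ← Matrix.mul_assoc (B ε),
              Matrix.mul_nonsing_inv _ hBu, Matrix.one_mul, hP1]
    refine ⟨Matrix.isUnit_det_of_right_inverse hAR, ?_⟩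
    have hAinv : (weakCouplingA sqrtα V ω 𝒜 ε)⁻¹ = P * (B ε)⁻¹ * Pinv :=
      Matrix.inv_eq_right_inv hAR
    have hFinv' : (F ε)⁻¹ = ((F ε).det)⁻¹ • (F ε).adjugate := by
      rw [Matrix.inv_def, Ring.inverse_eq_inv']
    rw [hAinv, hBinv, hFinv', hhdef, hWdef]
    rw [Matrix.mul_smul (Matrix.diagonal (δ ε)), smul_smul, Matrix.mul_smul P,
      Matrix.smul_mul, Matrix.smul_mulVec, smul_smul]
    congr 1
    rw [← mul_assoc, neg_mul, mul_inv_cancel₀ hε2, neg_one_mul]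
  constructor
  · filter_upwards [hEv] with ε hε using (key ε hε.1 hε.2).1
  · -- the limit
    have hVQ : V * Q * Vᴴ = Matrix.vecMulVec v (star v) := by
      rw [hQdef, hvdef]
      ext i j
      rw [Matrix.mul_apply]
      simp only [Matrix.mul_diagonal, Matrix.conjTranspose_apply, mul_ite, mul_one, mul_zero,
        ite_mul, zero_mul, Matrix.vecMulVec_apply, Pi.star_apply]
      rw [Finset.sum_eq_single k₀]
      · simp
      · intro c _ hc; simp [hc]
      · simp
    have hPQ : P * (Q * (F 0).adjugate) * Pinv = SC * (V * Q * Vᴴ) * SC⁻¹ := by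
      rw [hQadj, hPdef, hPinvdef]
      simp only [Matrix.mul_assoc]
    rw [hVQ] at hPQ
    have hh0 : h 0 = (-(1 : ℂ) / ν) • ((SC * Matrix.vecMulVec v (star v) * SC⁻¹).mulVec bC) := by
      rw [hhdef, hWdef]
      show (-((F 0).det)⁻¹) •
          ((P * (Matrix.diagonal (δ 0) * (F 0).adjugate) * Pinv).mulVec bC) = _
      rw [hQ0, hPQ, hdetF0, neg_div, one_div]
    have hg : Filter.Tendsto h (nhdsWithin (0 : ℝ) (Set.Ioi 0)) (nhds (h 0)) :=
      hhc.tendsto.mono_left nhdsWithin_le_nhds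
    rw [hh0] at hg
    refine Filter.Tendsto.congr' ?_ hg
    filter_upwards [hEv] with ε hε
    exact ((key ε hε.1 hε.2).2).symm


/-- **Weak-coupling limit of the invariant mean vector (Theorem 7.1).**
With `α ≻ 0` symmetric with principal square root `√α`, `V` unitary, pairwise distinct
eigenfrequencies `ω_k` with `ω_{k₀} = 0`, `A_ε = A₀ + ε² 𝒜` and `Re ν_k < 0` for all `k`,
the matrices `A_ε` are invertible for all sufficiently small `ε > 0`, and the invariant
mean vectors `μ_ε = -ε² A_ε⁻¹ b` converge to `-(1/ν_{k₀}) √α v_{k₀} v_{k₀}* (√α)⁻¹ b`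
as `ε → 0+`. -/
theorem weak_coupling_invariant_state_limit
    {n : ℕ} (α sqrtα 𝒜 : Matrix (Fin n) (Fin n) ℝ)
    (hαs : α.IsSymm) (hα : α.PosDef)
    (hsq : sqrtα.PosSemidef) (hsq2 : sqrtα * sqrtα = α)
    (V : Matrix (Fin n) (Fin n) ℂ) (hV : V ∈ Matrix.unitaryGroup (Fin n) ℂ)
    (ω : Fin n → ℝ) (hω : Function.Injective ω)
    (k₀ : Fin n) (hk₀ : ω k₀ = 0)
    (hν : ∀ k, (weakCouplingNu sqrtα V 𝒜 k).re < 0)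
    (b : Fin n → ℝ) :
    (∀ᶠ ε in nhdsWithin (0 : ℝ) (Set.Ioi 0), IsUnit (weakCouplingA sqrtα V ω 𝒜 ε).det) ∧
    Filter.Tendsto
      (fun ε : ℝ => (-(ε : ℂ) ^ 2) •
        ((weakCouplingA sqrtα V ω 𝒜 ε)⁻¹.mulVec fun i => (b i : ℂ)))
      (nhdsWithin (0 : ℝ) (Set.Ioi 0))
      (nhds ((-(1 : ℂ) / weakCouplingNu sqrtα V 𝒜 k₀) •
        ((sqrtα.map Complex.ofReal *
            Matrix.vecMulVec (fun i => V i k₀) (star fun i => V i k₀) *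
            (sqrtα.map Complex.ofReal)⁻¹).mulVec fun i => (b i : ℂ)))) :=
  weak_coupling_invariant_state_limit_aux α sqrtα 𝒜 hαs hα hsq hsq2 V hV ω hω k₀ hk₀ hν b
end

section
/- Let X¹_1,...,X¹_{n₁} be d₁×d₁ complex matrices satisfying X¹_j X¹_p = α¹_{jp}·I_{d₁} + Σ_{r=1}^{n₁} β¹_{jpr} X¹_r with α¹ ∈ ℝ^{n₁×n₁} real symmetric and β¹_{pjr} = conj(β¹_{jpr}) for all j,p,r (Hermitian sections), and let X²_1,...,X²_{n₂} be d₂×d₂ complex matrices satisfying the analogous structure with α² ∈ ℝ^{n₂×n₂} real symmetric and β²_{qks} = conj(β²_{kqs}). Write θ¹_{jpr} := Im β¹_{jpr} and θ²_{kqs} := Im β²_{kqs}. Then for all j,p ∈ {1,...,n₁} and k,q ∈ {1,...,n₂}, the commutator satisfies [X¹_j ⊗ X²_k, X¹_p ⊗ X²_q] = 2i·( Σ_{r=1}^{n₁} θ¹_{jpr} α²_{kq} (X¹_r ⊗ I_{d₂}) + Σ_{s=1}^{n₂} α¹_{jp} θ²_{kqs} (I_{d₁} ⊗ X²_s) + Σ_{r=1}^{n₁}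 Σ_{s=1}^{n₂} ( θ¹_{jpr}·Re β²_{kqs} + Re β¹_{jpr}·θ²_{kqs} ) (X¹_r ⊗ X²_s) ). -/
open Matrix
open scoped Kronecker

private lemma sum_kron_left {d₁ d₂ : ℕ} {ι : Type*} (s : Finset ι)
    (f : ι → Matrix (Fin d₁) (Fin d₁) ℂ) (B : Matrix (Fin d₂) (Fin d₂) ℂ) :
    (∑ i ∈ s, f i) ⊗ₖ B = ∑ i ∈ s, f i ⊗ₖ B := by
  induction s using Finset.cons_induction with
  | empty => simp [Matrix.zero_kronecker]
  | cons a s ha ih => simp [Finset.sum_cons, Matrix.add_kronecker, ih]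

private lemma sum_kron_right {d₁ d₂ : ℕ} {ι : Type*} (s : Finset ι)
    (A : Matrix (Fin d₁) (Fin d₁) ℂ) (f : ι → Matrix (Fin d₂) (Fin d₂) ℂ) :
    A ⊗ₖ (∑ i ∈ s, f i) = ∑ i ∈ s, A ⊗ₖ f i := by
  induction s using Finset.cons_induction with
  | empty => simp [Matrix.kronecker_zero]
  | cons a s ha ih => simp [Finset.sum_cons, Matrix.kronecker_add, ih]

private lemma expand_kron {d₁ d₂ n₁ n₂ : ℕ}
    (X₁ : Fin n₁ → Matrix (Fin d₁) (Fin d₁) ℂ)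
    (X₂ : Fin n₂ → Matrix (Fin d₂) (Fin d₂) ℂ)
    (a c : ℂ) (B : Fin n₁ → ℂ) (D : Fin n₂ → ℂ) :
    (a • 1 + ∑ r, B r • X₁ r) ⊗ₖ (c • 1 + ∑ s, D s • X₂ s)
      = (a * c) • ((1 : Matrix (Fin d₁) (Fin d₁) ℂ) ⊗ₖ (1 : Matrix (Fin d₂) (Fin d₂) ℂ))
        + ∑ r, (B r * c) • (X₁ r ⊗ₖ (1 : Matrix (Fin d₂) (Fin d₂) ℂ))
        + ∑ s, (a * D s) • ((1 : Matrix (Fin d₁) (Fin d₁) ℂ) ⊗ₖ X₂ s)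
        + ∑ r, ∑ s, (B r * D s) • (X₁ r ⊗ₖ X₂ s) := by
  simp only [Matrix.add_kronecker, Matrix.kronecker_add, sum_kron_left, sum_kron_right,
    Matrix.smul_kronecker, Matrix.kronecker_smul, smul_add, Finset.smul_sum, smul_smul,
    mul_comm]
  rw [Finset.sum_comm]
  abel

private lemma key_kron {d₁ d₂ n₁ n₂ : ℕ}
    (X₁ : Fin n₁ → Matrix (Fin d₁) (Fin d₁) ℂ)
    (X₂ : Fin n₂ → Matrix (Fin d₂) (Fin d₂) ℂ)
    (a c : ℝ) (B : Fin n₁ → ℂ) (D : Fin n₂ → ℂ) :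
    ((a : ℂ) • 1 + ∑ r, B r • X₁ r) ⊗ₖ ((c : ℂ) • 1 + ∑ s, D s • X₂ s)
      - ((a : ℂ) • 1 + ∑ r, (starRingEnd ℂ) (B r) • X₁ r) ⊗ₖ
          ((c : ℂ) • 1 + ∑ s, (starRingEnd ℂ) (D s) • X₂ s)
      = (2 * Complex.I) •
          (∑ r, (((B r).im : ℂ) * (c : ℂ)) • (X₁ r ⊗ₖ (1 : Matrix (Fin d₂) (Fin d₂) ℂ))
            + ∑ s, ((a : ℂ) * ((D s).im : ℂ)) • ((1 : Matrix (Fin d₁) (Fin d₁) ℂ) ⊗ₖ X₂ s)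
            + ∑ r, ∑ s, (((B r).im * (D s).re + (B r).re * (D s).im : ℝ) : ℂ) •
                (X₁ r ⊗ₖ X₂ s)) := by
  rw [expand_kron, expand_kron]
  have c1 : ∀ r, B r * (c : ℂ) - (starRingEnd ℂ) (B r) * (c : ℂ)
      = (2 * Complex.I) * (((B r).im : ℂ) * (c : ℂ)) := fun r => by
    apply Complex.ext <;>
      simp [Complex.mul_re, Complex.mul_im] <;> ring
  have c2 : ∀ s, (a : ℂ) * D s - (a : ℂ) * (starRingEnd ℂ) (D s)
      = (2 * Complex.I) * ((a : ℂ) * ((D s).im : ℂ)) := fun s => by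
    apply Complex.ext <;>
      simp [Complex.mul_re, Complex.mul_im] <;> ring
  have c3 : ∀ r s, B r * D s - (starRingEnd ℂ) (B r) * ((starRingEnd ℂ) (D s))
      = (2 * Complex.I) * (((B r).im * (D s).re + (B r).re * (D s).im : ℝ) : ℂ) := fun r s => by
    apply Complex.ext <;>
      simp [Complex.mul_re, Complex.mul_im] <;> ring
  simp only [smul_add, Finset.smul_sum, smul_smul, ← c1, ← c2, ← c3, sub_smul,
    Finset.sum_sub_distrib]
  abel


/-- **Commutation relations for the product variables (equation (X12CCR), Section 8).**
If two families of square complex matrices satisfy algebraic structures with real symmetric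
constant matrices `α¹, α²` and Hermitian sections (`β¹_{pjr} = conj β¹_{jpr}`,
`β²_{qks} = conj β²_{kqs}`), and `θ¹ = Im β¹`, `θ² = Im β²`, then the commutator of the
Kronecker products `X¹_j ⊗ X²_k` and `X¹_p ⊗ X²_q` is
`2i (∑ r, θ¹_{jpr} α²_{kq} (X¹_r ⊗ I) + ∑ s, α¹_{jp} θ²_{kqs} (I ⊗ X²_s)
  + ∑ r s, (θ¹_{jpr} Re β²_{kqs} + Re β¹_{jpr} θ²_{kqs}) (X¹_r ⊗ X²_s))`. -/
theorem kronecker_product_commutation_relations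
    {d₁ d₂ n₁ n₂ : ℕ}
    (X₁ : Fin n₁ → Matrix (Fin d₁) (Fin d₁) ℂ)
    (X₂ : Fin n₂ → Matrix (Fin d₂) (Fin d₂) ℂ)
    (α₁ : Fin n₁ → Fin n₁ → ℝ) (β₁ : Fin n₁ → Fin n₁ → Fin n₁ → ℂ)
    (α₂ : Fin n₂ → Fin n₂ → ℝ) (β₂ : Fin n₂ → Fin n₂ → Fin n₂ → ℂ)
    (hα₁ : ∀ j p, α₁ j p = α₁ p j) (hα₂ : ∀ k q, α₂ k q = α₂ q k)
    (hβ₁ : ∀ j p r, β₁ p j r = starRingEnd ℂ (β₁ j p r))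
    (hβ₂ : ∀ k q s, β₂ q k s = starRingEnd ℂ (β₂ k q s))
    (h₁ : ∀ j p, X₁ j * X₁ p
      = (α₁ j p : ℂ) • (1 : Matrix (Fin d₁) (Fin d₁) ℂ) + ∑ r, β₁ j p r • X₁ r)
    (h₂ : ∀ k q, X₂ k * X₂ q
      = (α₂ k q : ℂ) • (1 : Matrix (Fin d₂) (Fin d₂) ℂ) + ∑ s, β₂ k q s • X₂ s)
    (j p : Fin n₁) (k q : Fin n₂) :
    (X₁ j ⊗ₖ X₂ k) * (X₁ p ⊗ₖ X₂ q) - (X₁ p ⊗ₖ X₂ q) * (X₁ j ⊗ₖ X₂ k)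
      = (2 * Complex.I) •
          (∑ r, (((β₁ j p r).im : ℂ) * (α₂ k q : ℂ)) •
              (X₁ r ⊗ₖ (1 : Matrix (Fin d₂) (Fin d₂) ℂ))
            + ∑ s, ((α₁ j p : ℂ) * ((β₂ k q s).im : ℂ)) •
              ((1 : Matrix (Fin d₁) (Fin d₁) ℂ) ⊗ₖ X₂ s)
            + ∑ r, ∑ s,
              (((β₁ j p r).im * (β₂ k q s).re + (β₁ j p r).re * (β₂ k q s).im : ℝ) : ℂ) •
              (X₁ r ⊗ₖ X₂ s)) := by
  rw [← Matrix.mul_kronecker_mul, ← Matrix.mul_kronecker_mul, h₁ j p, h₂ k q, h₁ p j, h₂ q k,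
    ← hα₁ j p, ← hα₂ k q]
  simp only [hβ₁ j p, hβ₂ k q]
  exact key_kron X₁ X₂ (α₁ j p) (α₂ k q) (fun r => β₁ j p r) (fun s => β₂ k q s)
end

section
/- Let m ≥ 1 and M ∈ ℝ^{m×3} with rank M ≥ 2. Then the symmetric matrix ‖M‖_F²·I_3 − MᵀM is positive definite, where ‖M‖_F² = Tr(MᵀM). -/
/-!
Diagonalise the positive semidefinite matrix `MᵀM = U diag(λ) Uᵀ`, so `λ ≥ 0`. Then
`tr(MᵀM) I - MᵀM = U diag(∑ₖ λₖ - λᵢ) Uᵀ`, and each `∑ₖ λₖ - λᵢ` is positive because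
`rank(MᵀM) = rank M ≥ 2` provides a nonzero eigenvalue `λₖ` with `k ≠ i`.
-/

open Matrix Unitary
open scoped ComplexOrder

theorem Fintype.exists_ne_of_two_le_card_subtype {ι : Type*} {p : ι → Prop}
    [Fintype {i // p i}] (h : 2 ≤ Fintype.card {i // p i}) (j : ι) : ∃ k, k ≠ j ∧ p k := by
  obtain ⟨a, b, hab⟩ := Fintype.exists_pair_of_one_lt_card h
  by_cases ha : (a : ι) = j
  · exact ⟨b, fun hb => hab (Subtype.ext (ha.trans hb.symm)), b.2⟩
  · exact ⟨a, ha, a.2⟩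

theorem Matrix.PosSemidef.posDef_trace_smul_one_sub {n 𝕜 : Type*} [Fintype n] [DecidableEq n]
    [RCLike 𝕜] {A : Matrix n n 𝕜} (hA : A.PosSemidef) (hrank : 2 ≤ A.rank) :
    (A.trace • (1 : Matrix n n 𝕜) - A).PosDef := by
  have hspec := hA.isHermitian.spectral_theorem
  have htrace := hA.isHermitian.trace_eq_sum_eigenvalues
  -- abstracting the eigen-data from `hA` lets `A` be rewritten by `hspec` below
  set U := hA.isHermitian.eigenvectorUnitary
  set ev := hA.isHermitian.eigenvalues
  have hconj : A.trace • (1 : Matrix n n 𝕜) - A =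
      conjStarAlgAut 𝕜 _ U (diagonal fun i => ((∑ k, ev k - ev i : ℝ) : 𝕜)) := by
    rw [htrace, hspec, ← map_one (conjStarAlgAut 𝕜 _ U), ← map_smul, ← map_sub,
      smul_one_eq_diagonal, diagonal_sub]
    push_cast
    rfl
  rw [hconj, conjStarAlgAut_apply, isUnit_coe.posDef_star_right_conjugate_iff, posDef_diagonal_iff]
  intro i
  obtain ⟨k, hki, hk⟩ := Fintype.exists_ne_of_two_le_card_subtype
    (hA.isHermitian.rank_eq_card_non_zero_eigs ▸ hrank) i
  have hlt : ev i < ∑ k, ev k := Finset.single_lt_sum hki (Finset.mem_univ i) (Finset.mem_univ k)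
    ((hA.eigenvalues_nonneg k).lt_of_ne' hk) fun l _ _ => hA.eigenvalues_nonneg l
  exact RCLike.ofReal_pos.mpr (sub_pos.mpr hlt)

theorem pauli_dissipation_posDef_of_rank_general
    {m : ℕ} (M : Matrix (Fin m) (Fin 3) ℝ) (hrank : 2 ≤ M.rank) :
    ((Mᵀ * M).trace • (1 : Matrix (Fin 3) (Fin 3) ℝ) - Mᵀ * M).PosDef := by
  rw [← conjTranspose_eq_transpose_of_trivial]
  exact (posSemidef_conjTranspose_mul_self M).posDef_trace_smul_one_sub
    ((rank_conjTranspose_mul_self M).symm ▸ hrank)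

/-- **Positive definiteness of the Pauli dissipation matrix under the rank condition
(Section 9).** For `M ∈ ℝ^{m×3}` with `rank M ≥ 2`, the symmetric matrix
`‖M‖_F² I₃ - Mᵀ M` is positive definite, where `‖M‖_F² = Tr(Mᵀ M)`. -/
theorem pauli_dissipation_posDef_of_rank
    {m : ℕ} (hm : 1 ≤ m) (M : Matrix (Fin m) (Fin 3) ℝ) (hrank : 2 ≤ M.rank) :
    ((Mᵀ * M).trace • (1 : Matrix (Fin 3) (Fin 3) ℝ) - Mᵀ * M).PosDef :=
  pauli_dissipation_posDef_of_rank_general M hrank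
end
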